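/- arXiv:1407.0381 — 9 statements merged into one kernel-verified Lean document; each statement's English description precedes it below -/
import Mathlib

section
/- There exists a universal constant c > 0 such that for all integers k ≥ 2 and n ≥ 1, R*(k,n) ≥ c·(log k)²/n. -/
/-! Le Cam's two-point method. Let `P` put mass `3/4` on one atom and spread `1/4` uniformly over
the other `k - 1`, and let `Q` spread `1/4 + ε` instead, with `ε = 1/(16√n)`. Their entropies are
`q`-ary entropies, so concavity separates them by at least `ε log k`. Their Bhattacharyya
coefficient is at least `1 - ε²` and tensorizes over the `n` samples to at least `(1 - ε²)ⁿ`, which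
stays bounded away from `0`. Hence no estimator can be within `ε log k / 2` of the entropy under
both `P` and `Q` with high probability, and the risk is `≳ ε² (log k)² ≍ (log k)²/n`. -/

open scoped BigOperators
open Real

noncomputable section

/-- The set of probability vectors on `Fin k`. -/
def probVec (k : ℕ) : Set (Fin k → ℝ) := {P | (∀ i, 0 ≤ P i) ∧ (∑ i, P i) = 1}

/-- Shannon entropy `H(P) = ∑ pᵢ log (1/pᵢ)` (natural log, `0·log(1/0) = 0`). -/
def entropy {k : ℕ} (P : Fin k → ℝ) : ℝ := ∑ i, P i * Real.log (1 / P i)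

/-- The multinomial probability mass function of the histogram `N` of `n` i.i.d. samples
from `P`. -/
def multinomialPMF {k : ℕ} (n : ℕ) (P : Fin k → ℝ) (N : Fin k → ℕ) : ℝ :=
  if (∑ i, N i) = n then
    (n.factorial : ℝ) / (∏ i, ((N i).factorial : ℝ)) * ∏ i, P i ^ (N i)
  else 0

/-- Mean squared error of the estimator `est` of the entropy, from the histogram of
`n` i.i.d. samples of `P`. -/
def mseIID {k : ℕ} (n : ℕ) (P : Fin k → ℝ) (est : (Fin k → ℕ) → ℝ) : ℝ :=
  ∑' N : Fin k → ℕ, multinomialPMF n P N * (est N - entropy P) ^ 2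

/-- The minimax quadratic risk `R*(k,n)` of entropy estimation. -/
def Rstar (k n : ℕ) : ℝ :=
  ⨅ est : (Fin k → ℕ) → ℝ, ⨆ P : probVec k, mseIID n P.1 est

lemma min_mul_sq_sub_le {a b x u v : ℝ} (ha : 0 ≤ a) (hb : 0 ≤ b) :
    min a b * (v - u) ^ 2 / 2 ≤ a * (x - u) ^ 2 + b * (x - v) ^ 2 := by
  have hparallelogram : (v - u) ^ 2 / 2 ≤ (x - u) ^ 2 + (x - v) ^ 2 := by
    nlinarith [sq_nonneg (2 * x - u - v)]
  calc min a b * (v - u) ^ 2 / 2 ≤ min a b * ((x - u) ^ 2 + (x - v) ^ 2) := by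
        rw [mul_div_assoc]; exact mul_le_mul_of_nonneg_left hparallelogram (le_min ha hb)
    _ ≤ a * (x - u) ^ 2 + b * (x - v) ^ 2 := by
        rw [mul_add]
        gcongr
        exacts [min_le_left a b, min_le_right a b]

section TwoPoint

variable {ι : Type*} (s : Finset ι) {f g : ι → ℝ}

lemma sq_sum_sqrt_mul_le_mul_sum_min (hf : ∀ i, 0 ≤ f i) (hg : ∀ i, 0 ≤ g i) :
    (∑ i ∈ s, √(f i * g i)) ^ 2 ≤ (∑ i ∈ s, f i + ∑ i ∈ s, g i) * ∑ i ∈ s, min (f i) (g i) := by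
  have hmin : ∀ i, 0 ≤ min (f i) (g i) := fun i => le_min (hf i) (hg i)
  have hmax : ∀ i, 0 ≤ max (f i) (g i) := fun i => le_max_of_le_left (hf i)
  have hcs : ∑ i ∈ s, √(f i * g i) ≤
      √(∑ i ∈ s, min (f i) (g i)) * √(∑ i ∈ s, max (f i) (g i)) := by
    simp only [← min_mul_max (f _) (g _), Real.sqrt_mul (hmin _)]
    exact Real.sum_sqrt_mul_sqrt_le s hmin hmax
  have hsum_max : ∑ i ∈ s, max (f i) (g i) ≤ ∑ i ∈ s, f i + ∑ i ∈ s, g i := by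
    rw [← Finset.sum_add_distrib]
    exact Finset.sum_le_sum fun i _ =>
      max_le (le_add_of_nonneg_right (hg i)) (le_add_of_nonneg_left (hf i))
  have hmin_sum : 0 ≤ ∑ i ∈ s, min (f i) (g i) := Finset.sum_nonneg fun i _ => hmin i
  calc (∑ i ∈ s, √(f i * g i)) ^ 2
      ≤ (√(∑ i ∈ s, min (f i) (g i)) * √(∑ i ∈ s, max (f i) (g i))) ^ 2 :=
        pow_le_pow_left₀ (Finset.sum_nonneg fun i _ => Real.sqrt_nonneg _) hcs 2
    _ = (∑ i ∈ s, max (f i) (g i)) * ∑ i ∈ s, min (f i) (g i) := by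
        rw [mul_pow, Real.sq_sqrt hmin_sum,
          Real.sq_sqrt (Finset.sum_nonneg fun i _ => hmax i), mul_comm]
    _ ≤ (∑ i ∈ s, f i + ∑ i ∈ s, g i) * ∑ i ∈ s, min (f i) (g i) :=
        mul_le_mul_of_nonneg_right hsum_max hmin_sum

/-- Le Cam's two-point bound; `∑ i ∈ s, √(f i * g i)` is the Bhattacharyya coefficient of `f`
and `g`. -/
lemma two_point_lower_bound (hf : ∀ i, 0 ≤ f i) (hg : ∀ i, 0 ≤ g i)
    (hf1 : ∑ i ∈ s, f i = 1) (hg1 : ∑ i ∈ s, g i = 1) (x : ι → ℝ) (u v : ℝ) :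
    (∑ i ∈ s, √(f i * g i)) ^ 2 * (v - u) ^ 2 / 8 ≤
      max (∑ i ∈ s, f i * (x i - u) ^ 2) (∑ i ∈ s, g i * (x i - v) ^ 2) := by
  have haff := sq_sum_sqrt_mul_le_mul_sum_min s hf hg
  rw [hf1, hg1] at haff
  have hrisk : (∑ i ∈ s, min (f i) (g i)) * (v - u) ^ 2 / 2 ≤
      ∑ i ∈ s, f i * (x i - u) ^ 2 + ∑ i ∈ s, g i * (x i - v) ^ 2 := by
    rw [Finset.sum_mul, Finset.sum_div, ← Finset.sum_add_distrib]
    exact Finset.sum_le_sum fun i _ => min_mul_sq_sub_le (hf i) (hg i)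
  set A := ∑ i ∈ s, f i * (x i - u) ^ 2
  set B := ∑ i ∈ s, g i * (x i - v) ^ 2
  calc (∑ i ∈ s, √(f i * g i)) ^ 2 * (v - u) ^ 2 / 8
      ≤ (1 + 1) * (∑ i ∈ s, min (f i) (g i)) * (v - u) ^ 2 / 8 := by
        gcongr
    _ ≤ (A + B) / 2 := by linarith
    _ ≤ max A B := by linarith [le_max_left A B, le_max_right A B]

end TwoPoint

section Multinomial

variable {k n : ℕ}

lemma multinomialPMF_of_mem_piAntidiag {N : Fin k → ℕ}
    (hN : N ∈ Finset.piAntidiag Finset.univ n) (P : Fin k → ℝ) :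
    multinomialPMF n P N = Nat.multinomial Finset.univ N * ∏ i, P i ^ N i := by
  rw [Finset.mem_piAntidiag] at hN
  rw [multinomialPMF, if_pos hN.1, ← hN.1, ← Nat.multinomial_spec Finset.univ N]
  push_cast
  field_simp

lemma multinomialPMF_eq_zero {N : Fin k → ℕ} (hN : N ∉ Finset.piAntidiag Finset.univ n)
    (P : Fin k → ℝ) : multinomialPMF n P N = 0 := by
  rw [multinomialPMF, if_neg]
  simpa [Finset.mem_piAntidiag] using hN

lemma multinomialPMF_nonneg {P : Fin k → ℝ} (hP : ∀ i, 0 ≤ P i) (N : Fin k → ℕ) :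
    0 ≤ multinomialPMF n P N := by
  rw [multinomialPMF]
  split_ifs
  · exact mul_nonneg (by positivity) (Finset.prod_nonneg fun i _ => pow_nonneg (hP i) _)
  · exact le_rfl

lemma sum_multinomialPMF (P : Fin k → ℝ) :
    ∑ N ∈ Finset.piAntidiag Finset.univ n, multinomialPMF n P N = (∑ i, P i) ^ n := by
  rw [Finset.sum_pow_eq_sum_piAntidiag]
  exact Finset.sum_congr rfl fun N hN => multinomialPMF_of_mem_piAntidiag hN P

lemma sum_sqrt_multinomialPMF_mul {P Q : Fin k → ℝ} (hP : ∀ i, 0 ≤ P i) (hQ : ∀ i, 0 ≤ Q i) :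
    ∑ N ∈ Finset.piAntidiag Finset.univ n, √(multinomialPMF n P N * multinomialPMF n Q N) =
      (∑ i, √(P i * Q i)) ^ n := by
  rw [Finset.sum_pow_eq_sum_piAntidiag]
  refine Finset.sum_congr rfl fun N hN => ?_
  rw [multinomialPMF_of_mem_piAntidiag hN, multinomialPMF_of_mem_piAntidiag hN,
    ← Real.sqrt_sq (by positivity : (0 : ℝ) ≤ Nat.multinomial Finset.univ N *
      ∏ i, √(P i * Q i) ^ N i)]
  have hfactor : ∀ i, (√(P i * Q i) ^ N i) ^ 2 = P i ^ N i * Q i ^ N i := fun i => by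
    rw [← pow_mul, mul_comm (N i), pow_mul, Real.sq_sqrt (mul_nonneg (hP i) (hQ i)), mul_pow]
  rw [mul_pow, ← Finset.prod_pow, Finset.prod_congr rfl fun i _ => hfactor i,
    Finset.prod_mul_distrib]
  congr 1
  ring

lemma mseIID_eq_sum (P : Fin k → ℝ) (est : (Fin k → ℕ) → ℝ) :
    mseIID n P est = ∑ N ∈ Finset.piAntidiag Finset.univ n,
      multinomialPMF n P N * (est N - entropy P) ^ 2 :=
  tsum_eq_sum fun N hN => by rw [multinomialPMF_eq_zero hN, zero_mul]

end Multinomial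

lemma entropy_eq_sum_negMulLog {k : ℕ} (P : Fin k → ℝ) : entropy P = ∑ i, negMulLog (P i) := by
  simp only [entropy, negMulLog, one_div, Real.log_inv]
  exact Finset.sum_congr rfl fun i _ => by ring

lemma abs_entropy_le_card {k : ℕ} {P : Fin k → ℝ} (hP : P ∈ probVec k) : |entropy P| ≤ k := by
  have hP_le_one : ∀ i, P i ≤ 1 := fun i =>
    hP.2 ▸ Finset.single_le_sum (fun j _ => hP.1 j) (Finset.mem_univ i)
  rw [entropy_eq_sum_negMulLog, abs_of_nonneg
    (Finset.sum_nonneg fun i _ => negMulLog_nonneg (hP.1 i) (hP_le_one i))]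
  calc ∑ i, negMulLog (P i) ≤ ∑ _i : Fin k, (1 : ℝ) :=
        Finset.sum_le_sum fun i _ =>
          (negMulLog_le_one_sub_self (hP.1 i)).trans (by linarith [hP.1 i])
    _ = k := by simp

lemma bddAbove_mseIID {k : ℕ} (n : ℕ) (est : (Fin k → ℕ) → ℝ) :
    BddAbove (Set.range fun P : probVec k => mseIID n P.1 est) := by
  refine ⟨∑ N ∈ Finset.piAntidiag Finset.univ n, (|est N| + k) ^ 2, ?_⟩
  rintro _ ⟨⟨P, hP⟩, rfl⟩
  change mseIID n P est ≤ _
  rw [mseIID_eq_sum]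
  refine Finset.sum_le_sum fun N hN => ?_
  have hpmf_le_one : multinomialPMF n P N ≤ 1 := by
    rw [← one_pow n, ← hP.2, ← sum_multinomialPMF]
    exact Finset.single_le_sum (fun M _ => multinomialPMF_nonneg hP.1 M) hN
  have hsq : (est N - entropy P) ^ 2 ≤ (|est N| + k) ^ 2 := by
    rw [← sq_abs]
    exact pow_le_pow_left₀ (abs_nonneg _)
      ((abs_sub _ _).trans (add_le_add_right (abs_entropy_le_card hP) _)) 2
  calc multinomialPMF n P N * (est N - entropy P) ^ 2 ≤ 1 * (|est N| + k) ^ 2 :=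
        mul_le_mul hpmf_le_one hsq (sq_nonneg _) zero_le_one
    _ = (|est N| + k) ^ 2 := one_mul _

lemma Rstar_ge_of_mem_probVec {k : ℕ} (n : ℕ) {P Q : Fin k → ℝ} (hP : P ∈ probVec k)
    (hQ : Q ∈ probVec k) :
    ((∑ i, √(P i * Q i)) ^ n) ^ 2 * (entropy Q - entropy P) ^ 2 / 8 ≤ Rstar k n := by
  refine le_ciInf fun est => ?_
  rw [← sum_sqrt_multinomialPMF_mul hP.1 hQ.1]
  refine (two_point_lower_bound _ (multinomialPMF_nonneg hP.1) (multinomialPMF_nonneg hQ.1)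
    (by rw [sum_multinomialPMF, hP.2, one_pow]) (by rw [sum_multinomialPMF, hQ.2, one_pow])
    est _ _).trans (max_le ?_ ?_)
  · exact mseIID_eq_sum P est ▸ le_ciSup (bddAbove_mseIID n est) ⟨P, hP⟩
  · exact mseIID_eq_sum Q est ▸ le_ciSup (bddAbove_mseIID n est) ⟨Q, hQ⟩

lemma qaryEntropy_sub_qaryEntropy_ge {q : ℕ} (hq : 2 ≤ q) {a b : ℝ} (ha : 0 ≤ a) (hab : a < b)
    (hb : b ≤ 1 / 3) : (b - a) * log q ≤ qaryEntropy q b - qaryEntropy q a := by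
  have hb0 : 0 < b := ha.trans_lt hab
  have hq1 : (2 : ℝ) ≤ q := by exact_mod_cast hq
  -- concavity puts the chord slope above the derivative `log ((q - 1) (1 - b) / b)` at `b`
  have hslope := (strictConcaveOn_qaryEntropy (q := q)).concaveOn.le_slope_of_hasDerivAt
    ⟨ha, by linarith⟩ ⟨hb0.le, by linarith⟩ hab
    (hasDerivAt_qaryEntropy hb0.ne' (by linarith))
  rw [slope_def_field, le_div_iff₀ (by linarith)] at hslope
  have hderiv : log q ≤ log (q - 1) + log (1 - b) - log b := by
    rw [← Real.log_mul (by linarith) (by linarith), ← Real.log_div (by nlinarith) hb0.ne']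
    exact Real.log_le_log (by linarith) (by rw [le_div_iff₀ hb0]; nlinarith)
  nlinarith

def spiked (m : ℕ) (t : ℝ) : Fin (m + 1) → ℝ := fun i => if i = 0 then 1 - t else t / m

section Spiked

variable {m : ℕ}

lemma sum_ite_eq_zero_fin_succ (x y : ℝ) :
    ∑ i : Fin (m + 1), (if i = 0 then x else y) = x + m * y := by
  simp [Fin.sum_univ_succ, Fin.succ_ne_zero]

lemma spiked_mem_probVec (hm : m ≠ 0) {t : ℝ} (h0 : 0 ≤ t) (h1 : t ≤ 1) :
    spiked m t ∈ probVec (m + 1) := by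
  refine ⟨fun i => ?_, ?_⟩
  · unfold spiked
    split_ifs
    exacts [sub_nonneg.mpr h1, by positivity]
  · unfold spiked
    rw [sum_ite_eq_zero_fin_succ]
    field_simp
    ring

lemma entropy_spiked (hm : m ≠ 0) (t : ℝ) : entropy (spiked m t) = qaryEntropy (m + 1) t := by
  have hm' : (m : ℝ) ≠ 0 := by exact_mod_cast hm
  have hterm : ∀ i : Fin (m + 1), negMulLog (spiked m t i) =
      if i = 0 then negMulLog (1 - t) else (m : ℝ)⁻¹ * (negMulLog t + t * log m) := fun i => by
    unfold spiked
    split_ifs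
    · rfl
    · rw [div_eq_mul_inv, negMulLog_mul]
      simp only [negMulLog, Real.log_inv]
      ring
  rw [entropy_eq_sum_negMulLog, Finset.sum_congr rfl fun i _ => hterm i, sum_ite_eq_zero_fin_succ,
    qaryEntropy, binEntropy_eq_negMulLog_add_negMulLog_one_sub]
  push_cast [add_sub_cancel_right]
  field_simp
  ring

lemma sum_sqrt_spiked_mul (hm : m ≠ 0) (a b : ℝ) :
    ∑ i, √(spiked m a i * spiked m b i) = √((1 - a) * (1 - b)) + √(a * b) := by
  have hterm : ∀ i : Fin (m + 1), √(spiked m a i * spiked m b i) =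
      if i = 0 then √((1 - a) * (1 - b)) else √(a * b) / m := fun i => by
    unfold spiked
    split_ifs
    · rfl
    · rw [div_mul_div_comm, ← sq, Real.sqrt_div' _ (by positivity), Real.sqrt_sq (by positivity)]
  rw [Finset.sum_congr rfl fun i _ => hterm i, sum_ite_eq_zero_fin_succ]
  field_simp

end Spiked

lemma one_sub_sq_le_bhattacharyya {e : ℝ} (he0 : 0 ≤ e) (he : e ≤ 1 / 16) :
    1 - e ^ 2 ≤ √((1 - 1 / 4) * (1 - (1 / 4 + e))) + √(1 / 4 * (1 / 4 + e)) := by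
  have hsmall : 3 / 4 - e / 2 - e ^ 2 / 2 ≤ √((1 - 1 / 4) * (1 - (1 / 4 + e))) := by
    rw [Real.le_sqrt (by nlinarith) (by nlinarith)]
    nlinarith [mul_nonneg he0 he0, mul_nonneg (mul_nonneg he0 he0) he0]
  have hlarge : 1 / 4 + e / 2 - e ^ 2 / 2 ≤ √(1 / 4 * (1 / 4 + e)) := by
    rw [Real.le_sqrt (by nlinarith) (by linarith)]
    nlinarith [mul_nonneg he0 he0, mul_nonneg (mul_nonneg he0 he0) he0]
  linarith

lemma Rstar_succ_ge {m : ℕ} (hm : m ≠ 0) (n : ℕ) {e : ℝ} (he0 : 0 < e) (he : e ≤ 1 / 16) :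
    (1 - 2 * n * e ^ 2) * (e * log (m + 1)) ^ 2 / 8 ≤ Rstar (m + 1) n := by
  have hP := spiked_mem_probVec hm (t := 1 / 4) (by norm_num) (by norm_num)
  have hQ := spiked_mem_probVec hm (t := 1 / 4 + e) (by linarith) (by linarith)
  have hρ : 1 - e ^ 2 ≤ ∑ i, √(spiked m (1 / 4) i * spiked m (1 / 4 + e) i) :=
    (sum_sqrt_spiked_mul hm _ _).symm ▸ one_sub_sq_le_bhattacharyya he0.le he
  have hρn : 1 - 2 * n * e ^ 2 ≤ ((∑ i, √(spiked m (1 / 4) i * spiked m (1 / 4 + e) i)) ^ n) ^ 2 :=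
    calc 1 - 2 * n * e ^ 2 = 1 + ((2 * n : ℕ) : ℝ) * (-e ^ 2) := by push_cast; ring
      _ ≤ (1 + -e ^ 2) ^ (2 * n) := one_add_mul_le_pow (by nlinarith) _
      _ = ((1 - e ^ 2) ^ n) ^ 2 := by rw [← sub_eq_add_neg, ← pow_mul, mul_comm]
      _ ≤ _ := by
        have h : 0 ≤ 1 - e ^ 2 := by nlinarith
        gcongr
  have hgap : e * log (m + 1) ≤ entropy (spiked m (1 / 4 + e)) - entropy (spiked m (1 / 4)) := by
    rw [entropy_spiked hm, entropy_spiked hm]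
    have := qaryEntropy_sub_qaryEntropy_ge (q := m + 1) (by omega) (a := 1 / 4) (b := 1 / 4 + e)
      (by norm_num) (by linarith) (by linarith)
    push_cast at this
    linarith
  calc (1 - 2 * n * e ^ 2) * (e * log (m + 1)) ^ 2 / 8
      ≤ ((∑ i, √(spiked m (1 / 4) i * spiked m (1 / 4 + e) i)) ^ n) ^ 2 *
          (entropy (spiked m (1 / 4 + e)) - entropy (spiked m (1 / 4))) ^ 2 / 8 := by
        have : 0 ≤ e * log (m + 1) :=
          mul_nonneg he0.le (Real.log_nonneg (le_add_of_nonneg_left m.cast_nonneg))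
        gcongr
    _ ≤ Rstar (m + 1) n := Rstar_ge_of_mem_probVec n hP hQ

/-- minimax lower bound `R*(k,n) ≳ (log k)²/n`. -/
theorem minimax_lower_parametric :
    ∃ c : ℝ, 0 < c ∧ ∀ k n : ℕ, 2 ≤ k → 1 ≤ n →
      c * (Real.log k) ^ 2 / n ≤ Rstar k n := by
  refine ⟨1 / 4096, by norm_num, fun k n hk hn => ?_⟩
  obtain ⟨m, rfl⟩ : ∃ m, k = m + 1 := ⟨k - 1, by omega⟩
  have hn0 : (0 : ℝ) < n := by exact_mod_cast hn
  have hsqrt : 1 ≤ √(n : ℝ) := Real.one_le_sqrt.mpr (by exact_mod_cast hn)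
  set e := 1 / (16 * √(n : ℝ))
  have he2 : e ^ 2 = 1 / (256 * n) := by
    rw [div_pow, mul_pow, Real.sq_sqrt hn0.le]; norm_num
  have he : e ≤ 1 / 16 := by
    rw [div_le_div_iff₀ (by positivity) (by norm_num)]; linarith
  refine le_trans ?_ (Rstar_succ_ge (by omega) n (by positivity) he)
  rw [mul_pow, he2]
  push_cast
  field_simp
  nlinarith [sq_nonneg (log ((m : ℝ) + 1))]
end
end

section
/- Let M > 0, L ∈ ℕ with L > 2eM, and let V and V' be random variables taking values in [0,M] such that E[V^j] = E[V'^j] for j = 1,...,L. Then TV(E[Poi(V)], E[Poi(V')]) ≤ (2eM/L)^L. -/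
/-!
Expanding `e^{-x}` in its power series, the `j`-th mass of a Poisson mixture is
`∑ₖ (-1)ᵏ m_{j+k} / (j! k!)`, where `mₙ = E[Vⁿ]`. Matching moments kill every term with
`j + k ≤ L`, and `|mₙ - m'ₙ| ≤ 2 Mⁿ`; since `∑_{j+k=n} 1/(j! k!) = 2ⁿ/n!`, the `ℓ¹` distance of
the two mixtures is at most `2 ∑_{n>L} (2M)ⁿ/n!`, and TV is half of it. Beyond `L` consecutive
terms of this tail shrink by a factor `≤ 1/2`, so it is at most `2 (2M)^{L+1}/(L+1)!`. Finally
`(L+1)! ≥ ((L+1)/e)^{L+1}` and `(1 + 1/L)^L ≥ 2` turn this into `(2eM/L)^L`.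
-/

open scoped BigOperators
open Real MeasureTheory

noncomputable section

/-- The Poisson probability mass function with mean `t`. -/
def poissonPMF (t : ℝ) (m : ℕ) : ℝ := Real.exp (-t) * t ^ m / (m.factorial : ℝ)

/-- Total variation distance between two probability mass functions on `ℕ`:
`TV(P,Q) = sup_A |P(A) − Q(A)|`. -/
def TVpmf (p q : ℕ → ℝ) : ℝ :=
  ⨆ A : Set ℕ, |(∑' j : A, p ↑j) - (∑' j : A, q ↑j)|

open scoped Nat
open Finset

lemma hasSum_pow_div_factorial (x : ℝ) : HasSum (fun n => x ^ n / n !) (exp x) := by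
  rw [Real.exp_eq_exp_ℝ]
  exact NormedSpace.expSeries_div_hasSum_exp x

lemma hasSum_poissonPMF (x : ℝ) : HasSum (poissonPMF x) 1 := by
  have h := (hasSum_pow_div_factorial x).mul_left (exp (-x))
  rw [← exp_add, neg_add_cancel, exp_zero] at h
  have hpmf : poissonPMF x = fun j => exp (-x) * (x ^ j / j !) := by
    ext j
    rw [poissonPMF, mul_div_assoc]
  rwa [hpmf]

lemma hasSum_poissonPMF_expansion (x : ℝ) (j : ℕ) :
    HasSum (fun k => (-1) ^ k / (j ! * k !) * x ^ (j + k)) (poissonPMF x j) := by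
  have h := (hasSum_pow_div_factorial (-x)).mul_left (x ^ j / j !)
  rw [show x ^ j / j ! * exp (-x) = poissonPMF x j by rw [poissonPMF]; ring] at h
  have hterm : (fun k => (-1) ^ k / (j ! * k !) * x ^ (j + k))
      = fun k : ℕ => x ^ j / j ! * ((-x) ^ k / k !) := by
    ext k
    rw [neg_pow x, pow_add]
    field_simp
  rwa [hterm]

lemma continuous_poissonPMF (j : ℕ) : Continuous fun x => poissonPMF x j := by
  unfold poissonPMF
  fun_prop

lemma poissonPMF_nonneg {x : ℝ} (hx : 0 ≤ x) (j : ℕ) : 0 ≤ poissonPMF x j := by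
  unfold poissonPMF
  positivity

lemma poissonPMF_le {x M : ℝ} (hx : x ∈ Set.Icc 0 M) (j : ℕ) : poissonPMF x j ≤ M ^ j / j ! := by
  have hexp : exp (-x) ≤ 1 := exp_le_one_iff.mpr (neg_nonpos.mpr hx.1)
  have hpow : x ^ j ≤ M ^ j := pow_le_pow_left₀ hx.1 hx.2 j
  have hx0 : 0 ≤ x ^ j := pow_nonneg hx.1 j
  unfold poissonPMF
  gcongr
  nlinarith

lemma hasSum_integral_of_norm_le_summable {α E : Type*} [MeasurableSpace α] {μ : Measure α}
    [IsFiniteMeasure μ] [NormedAddCommGroup E] [NormedSpace ℝ E] {F : ℕ → α → E} {f : α → E}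
    {C : ℕ → ℝ}
    (hF : ∀ k, AEStronglyMeasurable (F k) μ) (hC : Summable C)
    (hFC : ∀ k, ∀ᵐ x ∂μ, ‖F k x‖ ≤ C k) (hf : ∀ᵐ x ∂μ, HasSum (F · x) (f x)) :
    HasSum (fun k => ∫ x, F k x ∂μ) (∫ x, f x ∂μ) :=
  hasSum_integral_of_dominated_convergence (fun k _ => C k) hF hFC (ae_of_all _ fun _ => hC)
    (integrable_const _) hf

section MixtureOnInterval

variable {M : ℝ} {μ : Measure ℝ}

lemma abs_integral_pow_le [IsProbabilityMeasure μ] (hμ : ∀ᵐ x ∂μ, x ∈ Set.Icc 0 M) (n : ℕ) :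
    |∫ x, x ^ n ∂μ| ≤ M ^ n := by
  have h := norm_integral_le_of_norm_le_const (μ := μ) (f := fun x : ℝ => x ^ n) (C := M ^ n) <| by
    filter_upwards [hμ] with x hx
    rw [Real.norm_eq_abs, abs_of_nonneg (pow_nonneg hx.1 n)]
    exact pow_le_pow_left₀ hx.1 hx.2 n
  simpa using h

lemma hasSum_integral_poissonPMF [IsProbabilityMeasure μ] (hμ : ∀ᵐ x ∂μ, x ∈ Set.Icc 0 M) :
    HasSum (fun j => ∫ x, poissonPMF x j ∂μ) 1 := by
  have h := hasSum_integral_of_norm_le_summable (μ := μ) (f := fun _ => 1)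
    (fun j => (continuous_poissonPMF j).aestronglyMeasurable) (Real.summable_pow_div_factorial M)
    (fun j => by
      filter_upwards [hμ] with x hx
      rw [Real.norm_eq_abs, abs_of_nonneg (poissonPMF_nonneg hx.1 j)]
      exact poissonPMF_le hx j)
    (ae_of_all _ hasSum_poissonPMF)
  simpa using h

lemma hasSum_integral_poissonPMF_expansion [IsFiniteMeasure μ]
    (hμ : ∀ᵐ x ∂μ, x ∈ Set.Icc 0 M) (j : ℕ) :
    HasSum (fun k => (-1) ^ k / (j ! * k !) * ∫ x, x ^ (j + k) ∂μ) (∫ x, poissonPMF x j ∂μ) := by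
  simp_rw [← integral_const_mul]
  refine hasSum_integral_of_norm_le_summable (fun k => by fun_prop)
    ((Real.summable_pow_div_factorial M).mul_left (M ^ j / j !)) (fun k => ?_)
    (ae_of_all _ fun x => hasSum_poissonPMF_expansion x j)
  filter_upwards [hμ] with x hx
  rw [norm_mul, norm_div, norm_pow, norm_neg, norm_one, one_pow, Real.norm_eq_abs,
    abs_of_nonneg (by positivity : (0 : ℝ) ≤ j ! * k !), Real.norm_eq_abs,
    abs_of_nonneg (pow_nonneg hx.1 _)]
  calc 1 / (j ! * k ! : ℝ) * x ^ (j + k) ≤ 1 / (j ! * k !) * M ^ (j + k) := by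
        gcongr
        exacts [hx.1, hx.2]
    _ = M ^ j / j ! * (M ^ k / k !) := by rw [pow_add]; field_simp

end MixtureOnInterval

lemma TVpmf_le_half_tsum_abs_sub {p q : ℕ → ℝ} (hp : Summable p) (hq : Summable q)
    (hpq : ∑' j, p j = ∑' j, q j) : TVpmf p q ≤ (∑' j, |p j - q j|) / 2 := by
  have hd : Summable fun j => p j - q j := hp.sub hq
  have habs (s : Set ℕ) : |∑' j : s, (p j - q j)| ≤ ∑' j : s, |p j - q j| := by
    simpa only [Real.norm_eq_abs] using
      norm_tsum_le_tsum_norm (f := fun j : s => p j - q j) (hd.norm.subtype (· ∈ s))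
  refine ciSup_le fun A => ?_
  have hcompl : ∑' j : A, (p j - q j) + ∑' j : (Aᶜ : Set ℕ), (p j - q j) = 0 := by
    rw [(hd.subtype (· ∈ A)).tsum_add_tsum_compl (hd.subtype (· ∈ Aᶜ)), hp.tsum_sub hq, hpq,
      sub_self]
  have htotal := (hd.abs.subtype (· ∈ A)).tsum_add_tsum_compl (hd.abs.subtype (· ∈ Aᶜ))
  have hA := habs A
  have hAc := habs Aᶜ
  rw [eq_neg_of_add_eq_zero_right hcompl, abs_neg] at hAc
  have hsub : ∑' j : A, p j - ∑' j : A, q j = ∑' j : A, (p j - q j) :=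
    ((hp.subtype (· ∈ A)).tsum_sub (hq.subtype (· ∈ A))).symm
  rw [hsub]
  linarith

lemma sum_antidiagonal_inv_factorial_mul (n : ℕ) :
    ∑ p ∈ antidiagonal n, 1 / ((p.1)! * (p.2)! : ℝ) = 2 ^ n / n ! := by
  have hchoose : ∀ p ∈ antidiagonal n, 1 / ((p.1)! * (p.2)! : ℝ) = (n.choose p.1 : ℝ) / n ! := by
    intro p hp
    rw [Finset.HasAntidiagonal.mem_antidiagonal] at hp
    subst hp
    rw [Nat.cast_add_choose]
    field_simp
  rw [sum_congr rfl hchoose, ← sum_div, Nat.sum_antidiagonal_eq_sum_range_succ_mk]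
  exact_mod_cast congrArg (fun m : ℕ => (m : ℝ) / n !) (Nat.sum_range_choose n)

lemma hasSum_tsum_sum_antidiagonal_of_nonneg {f : ℕ × ℕ → ℝ} (hf : 0 ≤ f)
    (h : Summable fun n => ∑ p ∈ antidiagonal n, f p) :
    HasSum f (∑' n, ∑ p ∈ antidiagonal n, f p) := by
  let e := Finset.HasAntidiagonal.sigmaAntidiagonalEquivProd (A := ℕ)
  have hfiber (n : ℕ) : ∑' p : antidiagonal n, f (e ⟨n, p⟩) = ∑ p ∈ antidiagonal n, f p :=
    Finset.tsum_subtype (antidiagonal n) f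
  have hsigma : Summable fun c => f (e c) := by
    refine (summable_sigma_of_nonneg fun _ => hf _).mpr ⟨fun _ => .of_finite, ?_⟩
    simpa only [hfiber] using h
  convert (e.summable_iff.mp hsigma).hasSum using 1
  rw [← e.tsum_eq, hsigma.tsum_sigma]
  simp only [hfiber]

lemma tsum_abs_le_of_hasSum_expansion {Δ d : ℕ → ℝ}
    (hd : ∀ j, HasSum (fun k => (-1) ^ k / (j ! * k !) * Δ (j + k)) (d j))
    (hΔ : Summable fun n => 2 ^ n / n ! * |Δ n|) :
    ∑' j, |d j| ≤ ∑' n, 2 ^ n / n ! * |Δ n| := by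
  let f : ℕ × ℕ → ℝ := fun p => |Δ (p.1 + p.2)| / ((p.1)! * (p.2)!)
  have hf_antidiagonal (n : ℕ) : ∑ p ∈ antidiagonal n, f p = 2 ^ n / n ! * |Δ n| := by
    rw [← sum_antidiagonal_inv_factorial_mul, sum_mul]
    refine sum_congr rfl fun p hp => ?_
    simp only [f, Finset.HasAntidiagonal.mem_antidiagonal.mp hp]
    ring
  have hf : HasSum f (∑' n, 2 ^ n / n ! * |Δ n|) := by
    have hf_nonneg : 0 ≤ f := fun p => div_nonneg (abs_nonneg _) (by positivity)
    simpa only [hf_antidiagonal] using hasSum_tsum_sum_antidiagonal_of_nonneg hf_nonneg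
      (hΔ.congr fun n => (hf_antidiagonal n).symm)
  have hrow (j : ℕ) : HasSum (fun k => f (j, k)) (∑' k, f (j, k)) :=
    (hf.summable.prod_factor j).hasSum
  have hd_le (j : ℕ) : |d j| ≤ ∑' k, f (j, k) := by
    refine (hd j).norm_le_of_bounded (hrow j) fun k => le_of_eq ?_
    simp only [f, Real.norm_eq_abs, abs_mul, abs_div, abs_pow, abs_neg, abs_one, one_pow,
      Nat.abs_cast]
    ring
  have hrows := hf.prod_fiberwise hrow
  calc ∑' j, |d j| ≤ ∑' j, ∑' k, f (j, k) :=
        (Summable.of_nonneg_of_le (fun _ => abs_nonneg _) hd_le hrows.summable).tsum_le_tsum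
          hd_le hrows.summable
    _ = ∑' n, 2 ^ n / n ! * |Δ n| := hrows.tsum_eq

lemma tsum_le_mul_exp_sub_sum_range {g : ℕ → ℝ} {x c : ℝ} {n : ℕ} (hg : Summable g)
    (hg_zero : ∀ m < n, g m = 0) (hg_le : ∀ m, g m ≤ c * (x ^ m / m !)) :
    ∑' m, g m ≤ c * (exp x - ∑ m ∈ range n, x ^ m / m !) := by
  rw [← hg.sum_add_tsum_nat_add n, sum_eq_zero fun m hm => hg_zero m (mem_range.mp hm), zero_add]
  exact hasSum_le (fun m => hg_le (m + n)) ((summable_nat_add_iff n).mpr hg).hasSum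
    (((hasSum_nat_add_iff' n).mpr (hasSum_pow_div_factorial x)).mul_left c)

lemma exp_sub_sum_range_le {x : ℝ} (hx : 0 ≤ x) {n : ℕ} (hxn : x / (n + 1) ≤ 1 / 2) :
    exp x - ∑ m ∈ range n, x ^ m / m ! ≤ 2 * (x ^ n / n !) := by
  have h := Complex.exp_bound' (x := (x : ℂ)) (n := n) (by
    rwa [Complex.norm_real, Real.norm_of_nonneg hx, Nat.cast_succ])
  rw [← Complex.ofReal_exp] at h
  norm_cast at h
  rw [Real.norm_of_nonneg hx, Real.norm_eq_abs] at h
  linarith [le_abs_self (exp x - ∑ m ∈ range n, x ^ m / m !)]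

lemma pow_div_factorial_le_exp_one_mul_div_pow {x : ℝ} (hx : 0 ≤ x) (n : ℕ) :
    x ^ n / n ! ≤ (exp 1 * x / n) ^ n := by
  rcases n.eq_zero_or_pos with rfl | hn
  · simp
  have hstirling : (n : ℝ) ^ n ≤ exp 1 ^ n * n ! := by
    have h := pow_div_factorial_le_exp (x := (n : ℝ)) n.cast_nonneg n
    rwa [← exp_one_pow, div_le_iff₀ (by positivity)] at h
  rw [div_pow, mul_pow, div_le_div_iff₀ (by positivity) (by positivity)]
  calc x ^ n * (n : ℝ) ^ n ≤ x ^ n * (exp 1 ^ n * n !) := by gcongr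
    _ = exp 1 ^ n * x ^ n * n ! := by ring

lemma two_mul_div_succ_pow_succ_le {y : ℝ} {L : ℕ} (hL : 1 ≤ L) (hy : 0 ≤ y)
    (hyL : y ≤ L + 1) : 2 * (y / (L + 1)) ^ (L + 1) ≤ (y / L) ^ L := by
  have hL0 : (0 : ℝ) < L := by exact_mod_cast hL
  have hbernoulli : 2 ≤ ((L + 1) / L : ℝ) ^ L := by
    have h := one_add_mul_le_pow (a := 1 / (L : ℝ)) (by linarith [one_div_pos.mpr hL0]) L
    rw [mul_one_div_cancel hL0.ne'] at h
    rw [add_div, div_self hL0.ne']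
    linarith
  have hsplit : (y / (L + 1)) ^ (L + 1) * ((L + 1) / L : ℝ) ^ L = (y / L) ^ L * (y / (L + 1)) := by
    rw [pow_succ, mul_right_comm, ← mul_pow]
    congr 2
    field_simp
  have hratio : y / (L + 1) ≤ 1 := div_le_one_of_le₀ hyL (by positivity)
  have hA : 0 ≤ (y / (L + 1)) ^ (L + 1) := by positivity
  have hB : 0 ≤ (y / L) ^ L := by positivity
  nlinarith [mul_le_mul_of_nonneg_left hbernoulli hA, mul_le_mul_of_nonneg_left hratio hB]

/-- total variation bound between Poisson mixtures via moment matching. -/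
theorem tv_poisson_mixtures_moment_matching
    (M : ℝ) (L : ℕ) (hM : 0 < M) (hL : 2 * Real.exp 1 * M < (L : ℝ))
    (μ μ' : Measure ℝ) [IsProbabilityMeasure μ] [IsProbabilityMeasure μ']
    (hμ : ∀ᵐ x ∂μ, x ∈ Set.Icc 0 M) (hμ' : ∀ᵐ x ∂μ', x ∈ Set.Icc 0 M)
    (hmom : ∀ j : ℕ, 1 ≤ j → j ≤ L → ∫ x, x ^ j ∂μ = ∫ x, x ^ j ∂μ') :
    TVpmf (fun j => ∫ x, poissonPMF x j ∂μ) (fun j => ∫ x, poissonPMF x j ∂μ')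
      ≤ (2 * Real.exp 1 * M / L) ^ L := by
  let Δ : ℕ → ℝ := fun n => ∫ x, x ^ n ∂μ - ∫ x, x ^ n ∂μ'
  have hΔ_zero : ∀ n < L + 1, 2 ^ n / n ! * |Δ n| = 0 := by
    intro n hn
    rcases n.eq_zero_or_pos with rfl | hn0
    · simp [Δ]
    · simp [Δ, hmom n hn0 (by omega)]
  have hΔ_le (n : ℕ) : 2 ^ n / n ! * |Δ n| ≤ 2 * ((2 * M) ^ n / n !) := by
    have hΔ_abs : |Δ n| ≤ M ^ n + M ^ n :=
      (abs_sub _ _).trans (add_le_add (abs_integral_pow_le hμ n) (abs_integral_pow_le hμ' n))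
    calc 2 ^ n / n ! * |Δ n| ≤ 2 ^ n / n ! * (M ^ n + M ^ n) := by gcongr
      _ = 2 * ((2 * M) ^ n / n !) := by ring
  have hΔ : Summable fun n => 2 ^ n / n ! * |Δ n| :=
    .of_nonneg_of_le (fun n => by positivity) hΔ_le
      ((Real.summable_pow_div_factorial _).mul_left 2)
  have hexpansion (j : ℕ) : HasSum (fun k => (-1) ^ k / (j ! * k !) * Δ (j + k))
      (∫ x, poissonPMF x j ∂μ - ∫ x, poissonPMF x j ∂μ') := by
    simpa only [Δ, mul_sub] using (hasSum_integral_poissonPMF_expansion hμ j).sub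
      (hasSum_integral_poissonPMF_expansion hμ' j)
  have he : 2 ≤ exp 1 := by linarith [add_one_le_exp (1 : ℝ)]
  have hL1 : 1 ≤ L := Nat.cast_pos.mp ((by positivity : (0 : ℝ) ≤ 2 * exp 1 * M).trans_lt hL)
  have hp := hasSum_integral_poissonPMF hμ
  have hq := hasSum_integral_poissonPMF hμ'
  calc _ ≤ (∑' j, |∫ x, poissonPMF x j ∂μ - ∫ x, poissonPMF x j ∂μ'|) / 2 :=
        TVpmf_le_half_tsum_abs_sub hp.summable hq.summable (hp.tsum_eq.trans hq.tsum_eq.symm)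
    _ ≤ (∑' n, 2 ^ n / n ! * |Δ n|) / 2 := by
        linarith [tsum_abs_le_of_hasSum_expansion hexpansion hΔ]
    _ ≤ exp (2 * M) - ∑ m ∈ range (L + 1), (2 * M) ^ m / m ! := by
        linarith [tsum_le_mul_exp_sub_sum_range hΔ hΔ_zero hΔ_le]
    _ ≤ 2 * ((2 * M) ^ (L + 1) / (L + 1)!) := by
        refine exp_sub_sum_range_le (by positivity) ?_
        rw [div_le_iff₀ (by positivity)]
        push_cast
        nlinarith
    _ ≤ 2 * (exp 1 * (2 * M) / (L + 1 : ℕ)) ^ (L + 1) := by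
        gcongr
        exact pow_div_factorial_le_exp_one_mul_div_pow (by positivity) _
    _ ≤ (exp 1 * (2 * M) / L) ^ L := by
        push_cast
        exact two_mul_div_succ_pow_succ_le hL1 (by positivity) (by linarith)
    _ = (2 * exp 1 * M / L) ^ L := by ring_nf
end
end

section
/- Let 0 < η < 1, 0 < α < 1, L ∈ ℕ, and let X, X' be random variables with values in [η,1] satisfying E[X^j] = E[X'^j] for j = 1,...,L. Define random variables U, U' with distributions P_U(A) = (1 − E[η/X])·1{0∈A} + E[(η/X)·1{αX/η ∈ A}] and P_{U'}(A) = (1 − E[η/X'])·1{0∈A} + E[(η/X')·1{αX'/η ∈ A}]. Then: (i) E[φ(U)] − E[φ(U')] = α·(E[log(1/X)] − E[log(1/X')]); (ii) E[U^j] = E[U'^j] for j = 1,...,L+1; in particular E[U] = E[U'] = α. -/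
open scoped BigOperators
open Real MeasureTheory

noncomputable section

/-- `φ(x) = x log (1/x)`, with `φ(0) = 0`. -/
def phi (x : ℝ) : ℝ := x * Real.log (1 / x)

/-!
The law `P_U` is an atom of mass `1 - E[η/X]` at `0` plus the push-forward under
`x ↦ α x / η` of the law of `X` reweighted by `η / x`, so
`E[f(U)] = (1 - E[η/X]) f(0) + E[(η/X) f(αX/η)]`. The weight cancels one power of `αX/η`:
`E[U^(k+1)] = α^(k+1) η^(-k) E[X^k]`, which transfers moments of order `≤ L` of `X` to moments of
order `≤ L + 1` of `U`; and `(η/x) φ(αx/η) = α log(η/α) + α log(1/x)`, which gives (i).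
-/

open Set

namespace MeasureTheory

section Reweighting

variable {Ω : Type*} [MeasurableSpace Ω] {μ : Measure Ω} {w g : Ω → ℝ}

def zeroAtomAddReweightedMap (μ : Measure Ω) (w g : Ω → ℝ) : Measure ℝ :=
  ENNReal.ofReal (1 - ∫ x, w x ∂μ) • Measure.dirac 0 +
    (μ.withDensity fun x => ENNReal.ofReal (w x)).map g

theorem isFiniteMeasure_zeroAtomAddReweightedMap (hw : Integrable w μ) :
    IsFiniteMeasure (zeroAtomAddReweightedMap μ w g) := by
  have := isFiniteMeasure_withDensity_ofReal hw.hasFiniteIntegral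
  refine ⟨?_⟩
  simp [zeroAtomAddReweightedMap, measure_lt_top]

theorem integral_zeroAtomAddReweightedMap (hw : Measurable w) (hw0 : 0 ≤ᵐ[μ] w)
    (hw1 : ∫ x, w x ∂μ ≤ 1) (hg : Measurable g) {f : ℝ → ℝ} (hf : Measurable f)
    (hfg : Integrable (fun x => w x * f (g x)) μ) :
    ∫ y, f y ∂zeroAtomAddReweightedMap μ w g
      = (1 - ∫ x, w x ∂μ) * f 0 + ∫ x, w x * f (g x) ∂μ := by
  have hdens : Measurable fun x => ENNReal.ofReal (w x) := hw.ennreal_ofReal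
  have htoReal : (fun x => (ENNReal.ofReal (w x)).toReal • f (g x)) =ᵐ[μ]
      fun x => w x * f (g x) := by
    filter_upwards [hw0] with x hx
    rw [ENNReal.toReal_ofReal hx, smul_eq_mul]
  have hf_map : Integrable f ((μ.withDensity fun x => ENNReal.ofReal (w x)).map g) := by
    rw [integrable_map_measure hf.aestronglyMeasurable hg.aemeasurable,
      integrable_withDensity_iff_integrable_smul' hdens
        (ae_of_all _ fun _ => ENNReal.ofReal_lt_top)]
    exact hfg.congr htoReal.symm
  rw [zeroAtomAddReweightedMap,
    integral_add_measure ((integrable_dirac (by simp)).smul_measure ENNReal.ofReal_ne_top) hf_map,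
    integral_smul_measure, integral_dirac, ENNReal.toReal_ofReal (sub_nonneg.2 hw1), smul_eq_mul,
    integral_map hg.aemeasurable hf.aestronglyMeasurable,
    integral_withDensity_eq_integral_toReal_smul hdens
      (ae_of_all _ fun _ => ENNReal.ofReal_lt_top),
    integral_congr_ae htoReal]

theorem zeroAtomAddReweightedMap_real_apply (hw : Measurable w) (hw0 : 0 ≤ᵐ[μ] w)
    (hw_int : Integrable w μ) (hw1 : ∫ x, w x ∂μ ≤ 1) (hg : Measurable g)
    {A : Set ℝ} (hA : MeasurableSet A) :
    (zeroAtomAddReweightedMap μ w g).real A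
      = (1 - ∫ x, w x ∂μ) * A.indicator (fun _ => (1 : ℝ)) 0
        + ∫ x, w x * A.indicator (fun _ => (1 : ℝ)) (g x) ∂μ := by
  have hind : Measurable (A.indicator fun _ => (1 : ℝ)) := measurable_const.indicator hA
  have hbdd : ∀ᵐ x ∂μ, ‖A.indicator (fun _ => (1 : ℝ)) (g x)‖ ≤ 1 :=
    ae_of_all _ fun x => by by_cases hx : g x ∈ A <;> simp [hx]
  rw [← integral_indicator_one hA]
  exact integral_zeroAtomAddReweightedMap hw hw0 hw1 hg hind
    (hw_int.mul_bdd (hind.comp hg).aestronglyMeasurable hbdd)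

theorem eq_zeroAtomAddReweightedMap {ν : Measure ℝ} [IsFiniteMeasure ν]
    (hw : Measurable w) (hw0 : 0 ≤ᵐ[μ] w) (hw_int : Integrable w μ) (hw1 : ∫ x, w x ∂μ ≤ 1)
    (hg : Measurable g)
    (hν : ∀ A : Set ℝ, MeasurableSet A →
      (ν A).toReal = (1 - ∫ x, w x ∂μ) * A.indicator (fun _ => (1 : ℝ)) 0
        + ∫ x, w x * A.indicator (fun _ => (1 : ℝ)) (g x) ∂μ) :
    ν = zeroAtomAddReweightedMap μ w g := by
  have := isFiniteMeasure_zeroAtomAddReweightedMap (g := g) hw_int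
  ext A hA
  rw [← measureReal_eq_measureReal_iff (measure_ne_top _ _) (measure_ne_top _ _),
    zeroAtomAddReweightedMap_real_apply hw hw0 hw_int hw1 hg hA]
  exact hν A hA

end Reweighting

theorem integrable_of_ae_mem_Icc {μ : Measure ℝ} [IsFiniteMeasure μ] {a b : ℝ}
    (hμ : ∀ᵐ x ∂μ, x ∈ Icc a b) {f : ℝ → ℝ} (hf : ContinuousOn f (Icc a b)) :
    Integrable f μ := by
  rw [← Measure.restrict_eq_self_of_ae_mem hμ]
  exact hf.integrableOn_compact isCompact_Icc

end MeasureTheory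

section Prior

variable {η α : ℝ} {μ : Measure ℝ}

def priorLaw (η α : ℝ) (μ : Measure ℝ) : Measure ℝ :=
  zeroAtomAddReweightedMap μ (fun x => η / x) (fun x => α * x / η)

theorem continuousOn_const_div_Icc {a b : ℝ} (ha : 0 < a) (c : ℝ) :
    ContinuousOn (fun x : ℝ => c / x) (Icc a b) :=
  continuousOn_const.div continuousOn_id fun _ hx => (ha.trans_le hx.1).ne'

theorem ae_nonneg_const_div (hη0 : 0 < η) (hμ : ∀ᵐ x ∂μ, x ∈ Icc η 1) :
    0 ≤ᵐ[μ] fun x => η / x := by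
  filter_upwards [hμ] with x hx using div_nonneg hη0.le (hη0.le.trans hx.1)

theorem integral_const_div_le_one [IsProbabilityMeasure μ] (hη0 : 0 < η)
    (hμ : ∀ᵐ x ∂μ, x ∈ Icc η 1) :
    ∫ x, η / x ∂μ ≤ 1 := by
  refine (integral_mono_ae (integrable_of_ae_mem_Icc hμ (continuousOn_const_div_Icc hη0 η))
    (integrable_const 1) ?_).trans_eq (by simp)
  filter_upwards [hμ] with x hx using (div_le_one (hη0.trans_le hx.1)).2 hx.1

theorem eq_priorLaw [IsProbabilityMeasure μ] {ν : Measure ℝ} [IsFiniteMeasure ν] (hη0 : 0 < η)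
    (hμ : ∀ᵐ x ∂μ, x ∈ Icc η 1)
    (hν : ∀ A : Set ℝ, MeasurableSet A →
      (ν A).toReal =
        (1 - ∫ x, η / x ∂μ) * A.indicator (fun _ => (1 : ℝ)) 0
          + ∫ x, (η / x) * A.indicator (fun _ => (1 : ℝ)) (α * x / η) ∂μ) :
    ν = priorLaw η α μ :=
  eq_zeroAtomAddReweightedMap (measurable_const.div measurable_id) (ae_nonneg_const_div hη0 hμ)
    (integrable_of_ae_mem_Icc hμ (continuousOn_const_div_Icc hη0 η))
    (integral_const_div_le_one hη0 hμ) ((measurable_id.const_mul α).div_const η) hν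

theorem integral_priorLaw [IsProbabilityMeasure μ] (hη0 : 0 < η) (hμ : ∀ᵐ x ∂μ, x ∈ Icc η 1)
    {f : ℝ → ℝ} (hf : Continuous f) :
    ∫ y, f y ∂priorLaw η α μ
      = (1 - ∫ x, η / x ∂μ) * f 0 + ∫ x, (η / x) * f (α * x / η) ∂μ :=
  integral_zeroAtomAddReweightedMap (measurable_const.div measurable_id)
    (ae_nonneg_const_div hη0 hμ) (integral_const_div_le_one hη0 hμ)
    ((measurable_id.const_mul α).div_const η) hf.measurable
    (integrable_of_ae_mem_Icc hμ
      ((continuousOn_const_div_Icc hη0 η).mul (hf.comp_continuousOn (by fun_prop))))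

theorem integral_pow_succ_priorLaw [IsProbabilityMeasure μ] (hη0 : 0 < η)
    (hμ : ∀ᵐ x ∂μ, x ∈ Icc η 1) (k : ℕ) :
    ∫ y, y ^ (k + 1) ∂priorLaw η α μ = α ^ (k + 1) / η ^ k * ∫ x, x ^ k ∂μ := by
  rw [integral_priorLaw hη0 hμ (continuous_pow _), zero_pow k.succ_ne_zero, mul_zero, zero_add,
    ← integral_const_mul]
  refine integral_congr_ae ?_
  filter_upwards [hμ] with x hx
  have hx0 : x ≠ 0 := (hη0.trans_le hx.1).ne'
  have hη : η ≠ 0 := hη0.ne'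
  rw [div_pow, mul_pow]
  field_simp
  ring

theorem phi_eq_negMulLog : phi = negMulLog := by
  funext x
  rw [phi, negMulLog, one_div, log_inv]
  ring

theorem div_mul_phi (hη : η ≠ 0) {x : ℝ} (hx : x ≠ 0) :
    η / x * phi (α * x / η) = α * log (η / α) + α * log (1 / x) := by
  rcases eq_or_ne α 0 with rfl | hα
  · simp [phi]
  have hcancel : η / x * (α * x / η) = α := by field_simp
  have hsplit : 1 / (α * x / η) = η / α * (1 / x) := by field_simp
  rw [phi, ← mul_assoc, hcancel, hsplit,
    log_mul (div_ne_zero hη hα) (one_div_ne_zero hx), mul_add]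

theorem integral_phi_priorLaw [IsProbabilityMeasure μ] (hη0 : 0 < η)
    (hμ : ∀ᵐ x ∂μ, x ∈ Icc η 1) :
    ∫ y, phi y ∂priorLaw η α μ = α * log (η / α) + α * ∫ x, log (1 / x) ∂μ := by
  have hlog_int : Integrable (fun x => log (1 / x)) μ :=
    integrable_of_ae_mem_Icc hμ <| (continuousOn_const_div_Icc hη0 1).log fun _ hx =>
      one_div_ne_zero (hη0.trans_le hx.1).ne'
  rw [integral_priorLaw hη0 hμ (phi_eq_negMulLog ▸ continuous_negMulLog),
    show phi 0 = 0 by simp [phi], mul_zero, zero_add,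
    integral_congr_ae (g := fun x => α * log (η / α) + α * log (1 / x)),
    integral_add (integrable_const _) (hlog_int.const_mul α), integral_const, integral_const_mul]
  · simp
  filter_upwards [hμ] with x hx using div_mul_phi hη0.ne' (hη0.trans_le hx.1).ne'

end Prior

theorem change_of_measure_prior_general
    (η α : ℝ) (hη0 : 0 < η) (L : ℕ)
    (μ μ' ν ν' : Measure ℝ)
    [IsProbabilityMeasure μ] [IsProbabilityMeasure μ']
    [IsProbabilityMeasure ν] [IsProbabilityMeasure ν']
    (hμ : ∀ᵐ x ∂μ, x ∈ Set.Icc η 1) (hμ' : ∀ᵐ x ∂μ', x ∈ Set.Icc η 1)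
    (hmom : ∀ j : ℕ, 1 ≤ j → j ≤ L → ∫ x, x ^ j ∂μ = ∫ x, x ^ j ∂μ')
    -- `ν` is the distribution of `U`:
    -- `P_U(A) = (1 − E[η/X])·1{0∈A} + E[(η/X)·1{αX/η ∈ A}]`
    (hν : ∀ A : Set ℝ, MeasurableSet A →
      (ν A).toReal =
        (1 - ∫ x, η / x ∂μ) * A.indicator (fun _ => (1 : ℝ)) 0
          + ∫ x, (η / x) * A.indicator (fun _ => (1 : ℝ)) (α * x / η) ∂μ)
    -- `ν'` is the distribution of `U'`:
    (hν' : ∀ A : Set ℝ, MeasurableSet A →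
      (ν' A).toReal =
        (1 - ∫ x, η / x ∂μ') * A.indicator (fun _ => (1 : ℝ)) 0
          + ∫ x, (η / x) * A.indicator (fun _ => (1 : ℝ)) (α * x / η) ∂μ') :
    ((∫ x, phi x ∂ν) - ∫ x, phi x ∂ν'
        = α * ((∫ x, Real.log (1 / x) ∂μ) - ∫ x, Real.log (1 / x) ∂μ')) ∧
    (∀ j : ℕ, 1 ≤ j → j ≤ L + 1 → ∫ x, x ^ j ∂ν = ∫ x, x ^ j ∂ν') ∧
    (∫ x, x ∂ν) = α ∧ (∫ x, x ∂ν') = α := by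
  obtain rfl := eq_priorLaw hη0 hμ hν
  obtain rfl := eq_priorLaw hη0 hμ' hν'
  have hmoment := integral_pow_succ_priorLaw (α := α) hη0 hμ
  have hmoment' := integral_pow_succ_priorLaw (α := α) hη0 hμ'
  refine ⟨?_, ?_, by simpa using hmoment 0, by simpa using hmoment' 0⟩
  · rw [integral_phi_priorLaw hη0 hμ, integral_phi_priorLaw hη0 hμ']
    ring
  · intro j hj hjL
    obtain ⟨k, rfl⟩ := Nat.exists_eq_add_of_le' hj
    rw [hmoment, hmoment']
    rcases k.eq_zero_or_pos with rfl | hk0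
    · simp
    · rw [hmom k hk0 (by omega)]

/-- construction of the priors `U, U'` from `X, X'` by change of measure. -/
theorem change_of_measure_prior
    (η α : ℝ) (hη0 : 0 < η) (hη1 : η < 1) (hα0 : 0 < α) (hα1 : α < 1) (L : ℕ)
    (μ μ' ν ν' : Measure ℝ)
    [IsProbabilityMeasure μ] [IsProbabilityMeasure μ']
    [IsProbabilityMeasure ν] [IsProbabilityMeasure ν']
    (hμ : ∀ᵐ x ∂μ, x ∈ Set.Icc η 1) (hμ' : ∀ᵐ x ∂μ', x ∈ Set.Icc η 1)
    (hmom : ∀ j : ℕ, 1 ≤ j → j ≤ L → ∫ x, x ^ j ∂μ = ∫ x, x ^ j ∂μ')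
    -- `ν` is the distribution of `U`:
    -- `P_U(A) = (1 − E[η/X])·1{0∈A} + E[(η/X)·1{αX/η ∈ A}]`
    (hν : ∀ A : Set ℝ, MeasurableSet A →
      (ν A).toReal =
        (1 - ∫ x, η / x ∂μ) * A.indicator (fun _ => (1 : ℝ)) 0
          + ∫ x, (η / x) * A.indicator (fun _ => (1 : ℝ)) (α * x / η) ∂μ)
    -- `ν'` is the distribution of `U'`:
    (hν' : ∀ A : Set ℝ, MeasurableSet A →
      (ν' A).toReal =
        (1 - ∫ x, η / x ∂μ') * A.indicator (fun _ => (1 : ℝ)) 0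
          + ∫ x, (η / x) * A.indicator (fun _ => (1 : ℝ)) (α * x / η) ∂μ') :
    ((∫ x, phi x ∂ν) - ∫ x, phi x ∂ν'
        = α * ((∫ x, Real.log (1 / x) ∂μ) - ∫ x, Real.log (1 / x) ∂μ')) ∧
    (∀ j : ℕ, 1 ≤ j → j ≤ L + 1 → ∫ x, x ^ j ∂ν = ∫ x, x ^ j ∂ν') ∧
    (∫ x, x ∂ν) = α ∧ (∫ x, x ∂ν') = α :=
  change_of_measure_prior_general η α hη0 L μ μ' ν ν' hμ hμ' hmom hν hν'
end
end

section
/- For every real λ > 1 and every L ∈ ℕ: F_L(λ) ≥ 2·E_L(log, [1/λ, 1]), where F_L(λ) = sup{ E[φ(U)] − E[φ(U')] : U, U' random variables with values in [0,λ], E[U] = E[U'] = 1, and E[U^j] = E[U'^j] for j = 1,...,L }. -/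
open scoped BigOperators
open Real MeasureTheory

noncomputable section

/-- Best uniform polynomial approximation error of `f` on `[a,b]` by polynomials of
degree at most `L`. -/
def bestApproxError (L : ℕ) (f : ℝ → ℝ) (a b : ℝ) : ℝ :=
  ⨅ p : {p : Polynomial ℝ // p.natDegree ≤ L},
    ⨆ x : Set.Icc a b, |f ↑x - Polynomial.eval (↑x : ℝ) p.1|

/-- `F_L(λ)`: maximal separation of `E[φ(U)] − E[φ(U')]` over pairs of unit-mean random
variables on `[0,λ]` with matching moments up to degree `L`. -/
def FL (L : ℕ) (lam : ℝ) : ℝ :=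
  sSup {d : ℝ | ∃ μ μ' : Measure ℝ,
    IsProbabilityMeasure μ ∧ IsProbabilityMeasure μ' ∧
    (∀ᵐ x ∂μ, x ∈ Set.Icc 0 lam) ∧ (∀ᵐ x ∂μ', x ∈ Set.Icc 0 lam) ∧
    (∫ x, x ∂μ) = 1 ∧ (∫ x, x ∂μ') = 1 ∧
    (∀ j : ℕ, 1 ≤ j → j ≤ L → ∫ x, x ^ j ∂μ = ∫ x, x ^ j ∂μ') ∧
    d = (∫ x, phi x ∂μ) - ∫ x, phi x ∂μ'}

/-!
If `c < E_L(log, [1/λ, 1])`, the translates by `∓c` in the last coordinate of the convex hull of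
the curve `t ↦ (1, t, …, t^L, log t)` cannot be disjoint: a functional separating them would yield
a polynomial of degree `≤ L` within `c` of `log`. A common point gives two finitely supported
probability measures on `[1/λ, 1]` with equal moments up to degree `L` whose `log`-integrals differ
by `2c`. Rescaling each of them to a unit-mean measure on `[0, λ]` shifts moments by one degree and
makes `∫ φ` equal to `-log λ - ∫ log`, so the pair witnesses `2c ≤ F_L(λ)`.
-/

open Set Polynomial

theorem IsCompact.convexHull {E : Type*} [NormedAddCommGroup E] [NormedSpace ℝ E]
    [FiniteDimensional ℝ E] {s : Set E} (hs : IsCompact s) : IsCompact (_root_.convexHull ℝ s) := by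
  let comb (k : ℕ) : (Fin k → ℝ) × (Fin k → E) → E := fun p => ∑ i, p.1 i • p.2 i
  let combinations (k : ℕ) := comb k '' (stdSimplex ℝ (Fin k) ×ˢ univ.pi fun _ => s)
  suffices h :
      _root_.convexHull ℝ s = ⋃ k ∈ Finset.range (Module.finrank ℝ E + 2), combinations k by
    rw [h]
    refine (Finset.range _).isCompact_biUnion fun k _ => ?_
    refine ((isCompact_stdSimplex ℝ (Fin k)).prod (isCompact_univ_pi fun _ => hs)).image ?_
    fun_prop
  apply Subset.antisymm
  · intro x hx
    -- Carathéodory: affinely independent points, hence at most `finrank + 1` of them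
    obtain ⟨ι, _, z, w, hzs, hind, hw0, hw1, rfl⟩ := eq_pos_convex_span_of_mem_convexHull hx
    let e := Fintype.equivFin ι
    refine mem_biUnion (x := Fintype.card ι) ?_ ⟨(w ∘ e.symm, z ∘ e.symm), ⟨⟨?_, ?_⟩, ?_⟩, ?_⟩
    · simpa [Nat.lt_succ_iff] using
        hind.card_le_finrank_succ.trans (Nat.succ_le_succ (Submodule.finrank_le _))
    · exact fun i => (hw0 _).le
    · simpa [e.symm.sum_comp] using hw1
    · exact fun i _ => hzs (mem_range_self _)
    · exact e.symm.sum_comp fun i => w i • z i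
  · simp only [iUnion_subset_iff]
    rintro k - _ ⟨p, ⟨⟨hw0, hw1⟩, hps⟩, rfl⟩
    exact (convex_convexHull ℝ s).sum_mem (fun i _ => hw0 i) hw1
      fun i _ => subset_convexHull ℝ s (hps i (mem_univ i))

def discreteMeasure {ι : Type*} (s : Finset ι) (w x : ι → ℝ) : Measure ℝ :=
  ∑ i ∈ s, ENNReal.ofReal (w i) • Measure.dirac (x i)

section discreteMeasure

variable {ι : Type*} {s : Finset ι} {w x : ι → ℝ}

lemma integral_discreteMeasure (hw : ∀ i ∈ s, 0 ≤ w i) (g : ℝ → ℝ) :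
    ∫ t, g t ∂discreteMeasure s w x = ∑ i ∈ s, w i * g (x i) := by
  rw [discreteMeasure, integral_finsetSum_measure fun i _ =>
    (integrable_dirac enorm_lt_top).smul_measure ENNReal.ofReal_ne_top]
  refine Finset.sum_congr rfl fun i hi => ?_
  rw [integral_smul_measure, integral_dirac, ENNReal.toReal_ofReal (hw i hi), smul_eq_mul]

lemma isProbabilityMeasure_discreteMeasure (hw : ∀ i ∈ s, 0 ≤ w i) (hw1 : ∑ i ∈ s, w i = 1) :
    IsProbabilityMeasure (discreteMeasure s w x) := by
  constructor
  simp only [discreteMeasure, Measure.finsetSum_apply, Measure.smul_apply, measure_univ,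
    smul_eq_mul, mul_one]
  rw [← ENNReal.ofReal_sum_of_nonneg hw, hw1, ENNReal.ofReal_one]

lemma ae_mem_discreteMeasure {S : Set ℝ} (hx : ∀ i ∈ s, x i ∈ S) :
    ∀ᵐ t ∂discreteMeasure s w x, t ∈ S := by
  rw [ae_iff, discreteMeasure, Measure.finsetSum_apply]
  refine Finset.sum_eq_zero fun i hi => ?_
  simp [hx i hi]

end discreteMeasure

/-- Points of the convex hull of `momentCurve M f '' S` are the vectors of moments of order `≤ M`
and `f`-integrals of finitely supported probability measures on `S`. -/
def momentCurve (M : ℕ) (f : ℝ → ℝ) (t : ℝ) : (Fin (M + 1) → ℝ) × ℝ :=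
  (fun j => t ^ (j : ℕ), f t)

lemma exists_of_mem_convexHull_momentCurve {M : ℕ} {f : ℝ → ℝ} {S : Set ℝ}
    {p : (Fin (M + 1) → ℝ) × ℝ} (hp : p ∈ convexHull ℝ (momentCurve M f '' S)) :
    ∃ (ι : Type) (s : Finset ι) (w x : ι → ℝ), (∀ i ∈ s, 0 ≤ w i) ∧ ∑ i ∈ s, w i = 1 ∧
      (∀ i ∈ s, x i ∈ S) ∧ (∀ j, p.1 j = ∑ i ∈ s, w i * x i ^ (j : ℕ)) ∧
      p.2 = ∑ i ∈ s, w i * f (x i) := by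
  rw [convexHull_eq] at hp
  obtain ⟨ι, s, w, z, hw0, hw1, hz, rfl⟩ := hp
  let x := Function.invFunOn (momentCurve M f) S ∘ z
  have hzx : ∀ i ∈ s, z i = momentCurve M f (x i) := fun i hi =>
    (Function.invFunOn_eq (hz i hi)).symm
  refine ⟨ι, s, w, x, hw0, hw1, fun i hi => Function.invFunOn_mem (hz i hi), fun j => ?_, ?_⟩
  all_goals
    rw [Finset.centerMass_eq_of_sum_1 _ _ hw1]
    simp only [Prod.fst_sum, Prod.snd_sum, Finset.sum_apply]
    refine Finset.sum_congr rfl fun i hi => ?_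
    simp [hzx i hi, momentCurve]

lemma exists_natDegree_le_eval_eq {M : ℕ} (G : (Fin (M + 1) → ℝ) →ₗ[ℝ] ℝ) :
    ∃ P : ℝ[X], P.natDegree ≤ M ∧ ∀ t, P.eval t = G (fun j => t ^ (j : ℕ)) := by
  refine ⟨∑ j : Fin (M + 1), C (G fun k => if j = k then 1 else 0) * X ^ (j : ℕ),
    natDegree_sum_le_of_forall_le _ _ fun j _ =>
      (natDegree_C_mul_X_pow_le _ _).trans (Nat.lt_succ_iff.mp j.is_lt), fun t => ?_⟩
  rw [LinearMap.pi_apply_eq_sum_univ G, eval_finsetSum]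
  refine Finset.sum_congr rfl fun j _ => ?_
  rw [eval_mul, eval_C, eval_pow, eval_X, smul_eq_mul, mul_comm]

lemma bestApproxError_le {L : ℕ} {f : ℝ → ℝ} {a b c : ℝ} {P : ℝ[X]} (hP : P.natDegree ≤ L)
    (hc : 0 ≤ c) (h : ∀ x ∈ Icc a b, |f x - P.eval x| ≤ c) : bestApproxError L f a b ≤ c :=
  ciInf_le_of_le ⟨0, by rintro _ ⟨Q, rfl⟩; exact Real.iSup_nonneg fun x => abs_nonneg _⟩ ⟨P, hP⟩
    (Real.iSup_le (fun x => h x x.2) hc)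

lemma bestApproxError_le_of_abs_sub_le {M : ℕ} {f : ℝ → ℝ} {a b c u : ℝ}
    (F : (Fin (M + 1) → ℝ) × ℝ →ₗ[ℝ] ℝ) (hβ : 0 < F (0, 1)) (hc : 0 ≤ c)
    (hF : ∀ x ∈ Icc a b, |F (momentCurve M f x) - u| ≤ c * F (0, 1)) :
    bestApproxError M f a b ≤ c := by
  set β := F (0, 1)
  -- `P t = (u - F ((t ^ j)_j, 0)) / β`, using `t ^ 0 = 1` for the constant term
  obtain ⟨P, hPdeg, hP⟩ := exists_natDegree_le_eval_eq
    (β⁻¹ • (u • LinearMap.proj 0 - F ∘ₗ LinearMap.inl ℝ _ ℝ))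
  refine bestApproxError_le hPdeg hc fun x hx => ?_
  have hsplit : F (momentCurve M f x) = F (fun j => x ^ (j : ℕ), 0) + f x * β := by
    have : momentCurve M f x =
        ((fun j => x ^ (j : ℕ), 0) : (Fin (M + 1) → ℝ) × ℝ) + f x • (0, 1) := by
      ext <;> simp [momentCurve]
    rw [this, map_add, map_smul, smul_eq_mul]
  have : f x - P.eval x = (F (momentCurve M f x) - u) / β := by
    simp only [hP, hsplit, LinearMap.smul_apply, LinearMap.sub_apply, LinearMap.proj_apply,
      LinearMap.coe_comp, Function.comp_apply, LinearMap.inl_apply, smul_eq_mul, Fin.val_zero,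
      pow_zero, mul_one]
    field_simp
    ring
  rw [this, abs_div, abs_of_pos hβ, div_le_iff₀ hβ]
  exact hF x hx

theorem exists_mem_convexHull_momentCurve_of_lt_bestApproxError {M : ℕ} {f : ℝ → ℝ} {a b c : ℝ}
    (hab : a ≤ b) (hf : ContinuousOn f (Icc a b)) (hc : c < bestApproxError M f a b) :
    ∃ p ∈ convexHull ℝ (momentCurve M f '' Icc a b),
      ∃ q ∈ convexHull ℝ (momentCurve M f '' Icc a b), p.1 = q.1 ∧ p.2 + 2 * c ≤ q.2 := by
  set K := convexHull ℝ (momentCurve M f '' Icc a b)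
  have haK : momentCurve M f a ∈ K := subset_convexHull ℝ _ ⟨a, left_mem_Icc.2 hab, rfl⟩
  rcases le_or_gt c 0 with hc0 | hc0
  · exact ⟨_, haK, _, haK, rfl, by linarith⟩
  -- if the translates `K ∓ c • z` were disjoint, a separating functional would approximate `f`
  -- within `c`
  by_contra hcon
  set z : (Fin (M + 1) → ℝ) × ℝ := (0, 1)
  have hK : IsCompact K := by
    refine IsCompact.convexHull (isCompact_Icc.image_of_continuousOn ?_)
    exact (continuousOn_pi.2 fun j => (continuous_pow _).continuousOn).prodMk hf
  have hdisj : Disjoint ((fun p => -(c • z) + p) '' K) ((fun p => c • z + p) '' K) := by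
    refine Set.disjoint_left.2 ?_
    rintro _ ⟨q, hq, rfl⟩ ⟨p, hp, hpq⟩
    have hqp : q = p + (2 * c) • z := by
      simp only at hpq
      linear_combination (norm := module) -hpq
    exact hcon ⟨p, hp, q, hq, by simp [hqp, z], by simp [hqp, z]⟩
  obtain ⟨F, u, v, hFu, huv, hFv⟩ := geometric_hahn_banach_compact_closed
    ((convex_convexHull ℝ _).translate _) (hK.image (by fun_prop))
    ((convex_convexHull ℝ _).translate _) (hK.image (by fun_prop)).isClosed hdisj
  have hcurve : ∀ x ∈ Icc a b, F (momentCurve M f x) - c * F z < u ∧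
      u < F (momentCurve M f x) + c * F z := by
    intro x hx
    have hxK : momentCurve M f x ∈ K := subset_convexHull ℝ _ ⟨x, hx, rfl⟩
    have h₁ := hFu _ ⟨_, hxK, rfl⟩
    have h₂ := hFv _ ⟨_, hxK, rfl⟩
    simp only [map_add, map_neg, map_smul, smul_eq_mul] at h₁ h₂
    constructor <;> linarith
  have hβ : 0 < F z := by
    have := hcurve a (left_mem_Icc.2 hab)
    nlinarith
  refine hc.not_ge (bestApproxError_le_of_abs_sub_le (u := u) F.toLinearMap hβ hc0.le
    fun x hx => abs_le.2 ?_)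
  have := hcurve x hx
  constructor <;> simp <;> linarith

lemma continuous_phi : Continuous phi := by
  have : phi = fun t => -(t * log t) := by
    funext t
    rw [phi, one_div, log_inv, mul_neg]
  rw [this]
  exact continuous_mul_log.neg

lemma integral_phi_sub_le_FL {L : ℕ} {lam : ℝ} {μ μ' : Measure ℝ} [IsProbabilityMeasure μ]
    [IsProbabilityMeasure μ'] (hμ : ∀ᵐ x ∂μ, x ∈ Icc 0 lam) (hμ' : ∀ᵐ x ∂μ', x ∈ Icc 0 lam)
    (hmean : ∫ x, x ∂μ = 1) (hmean' : ∫ x, x ∂μ' = 1)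
    (hmom : ∀ j : ℕ, 1 ≤ j → j ≤ L → ∫ x, x ^ j ∂μ = ∫ x, x ^ j ∂μ') :
    (∫ x, phi x ∂μ) - ∫ x, phi x ∂μ' ≤ FL L lam := by
  obtain ⟨C, hC⟩ := isCompact_Icc.exists_bound_of_continuousOn continuous_phi.continuousOn
  have hbound : ∀ ν : Measure ℝ, IsProbabilityMeasure ν → (∀ᵐ x ∂ν, x ∈ Icc 0 lam) →
      |∫ x, phi x ∂ν| ≤ C := fun ν _ hν => by
    simpa using norm_integral_le_of_norm_le_const (hν.mono fun x hx => hC x hx)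
  refine le_csSup ⟨C + C, ?_⟩
    ⟨μ, μ', inferInstance, inferInstance, hμ, hμ', hmean, hmean', hmom, rfl⟩
  rintro _ ⟨ν, ν', hν, hν', hνI, hν'I, -, -, -, rfl⟩
  have h₁ := abs_le.1 (hbound ν hν hνI)
  have h₂ := abs_le.1 (hbound ν' hν' hν'I)
  linarith [h₁.2, h₂.1]

/-- Mass `w i` at `x i ∈ [1/λ, 1]` becomes mass `w i / (λ x i)` at `λ x i`, which makes the mean
equal to one; the leftover mass sits at `0`, where `φ` and all positive powers vanish. -/
theorem exists_measure_of_mem_convexHull_momentCurve_log {lam : ℝ} (hlam : 0 < lam) {M : ℕ}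
    {p : (Fin (M + 1) → ℝ) × ℝ} (hp : p ∈ convexHull ℝ (momentCurve M log '' Icc (1 / lam) 1)) :
    ∃ μ : Measure ℝ, IsProbabilityMeasure μ ∧ (∀ᵐ t ∂μ, t ∈ Icc 0 lam) ∧ ∫ t, t ∂μ = 1 ∧
      (∀ j : Fin (M + 1), ∫ t, t ^ ((j : ℕ) + 1) ∂μ = lam ^ (j : ℕ) * p.1 j) ∧
      ∫ t, phi t ∂μ = -log lam - p.2 := by
  obtain ⟨ι, s, w, x, hw0, hw1, hx, hp1, hp2⟩ := exists_of_mem_convexHull_momentCurve hp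
  have hlx : ∀ i ∈ s, 1 ≤ lam * x i ∧ lam * x i ≤ lam := fun i hi => by
    have := hx i hi
    rw [mem_Icc, div_le_iff₀' hlam] at this
    exact ⟨this.1, by nlinarith [this.2]⟩
  have hx0 : ∀ i ∈ s, 0 < x i := fun i hi => by nlinarith [(hlx i hi).1]
  set S := ∑ i ∈ s, w i / (lam * x i)
  have hS : S ≤ 1 := hw1 ▸ Finset.sum_le_sum fun i hi => div_le_self (hw0 i hi) (hlx i hi).1
  let v : Option ι → ℝ := fun o => o.elim (1 - S) fun i => w i / (lam * x i)
  let y : Option ι → ℝ := fun o => o.elim 0 fun i => lam * x i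
  have hv : ∀ o ∈ s.insertNone, 0 ≤ v o :=
    Finset.forall_mem_insertNone.2
      ⟨sub_nonneg.2 hS, fun i hi => div_nonneg (hw0 i hi) (by linarith [hlx i hi])⟩
  have hint : ∀ g : ℝ → ℝ, g 0 = 0 →
      ∫ t, g t ∂discreteMeasure s.insertNone v y = ∑ i ∈ s, w i / (lam * x i) * g (lam * x i) :=
    fun g hg => by simp [integral_discreteMeasure hv, Finset.sum_insertNone, v, y, hg]
  refine ⟨discreteMeasure s.insertNone v y, isProbabilityMeasure_discreteMeasure hv ?_,
    ae_mem_discreteMeasure ?_, ?_, fun j => ?_, ?_⟩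
  · simp [Finset.sum_insertNone, v, S]
  · exact Finset.forall_mem_insertNone.2
      ⟨left_mem_Icc.2 hlam.le, fun i hi => ⟨by simp [y]; linarith [hlx i hi], (hlx i hi).2⟩⟩
  · rw [hint (fun t => t) rfl, ← hw1]
    refine Finset.sum_congr rfl fun i hi => ?_
    field_simp [(hx0 i hi).ne']
  · rw [hint (· ^ ((j : ℕ) + 1)) (by simp), hp1, Finset.mul_sum]
    refine Finset.sum_congr rfl fun i hi => ?_
    field_simp [(hx0 i hi).ne']
    ring
  · rw [hint phi (by simp [phi]), hp2, ← mul_one (-log lam), ← hw1, Finset.mul_sum,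
      ← Finset.sum_sub_distrib]
    refine Finset.sum_congr rfl fun i hi => ?_
    rw [phi, one_div, log_inv, log_mul hlam.ne' (hx0 i hi).ne']
    field_simp [(hx0 i hi).ne']
    ring

/-- `F_L(λ) ≥ 2·E_L(log, [1/λ, 1])`. -/
theorem FL_ge_two_approx_error (lam : ℝ) (hlam : 1 < lam) (L : ℕ) :
    2 * bestApproxError L Real.log (1 / lam) 1 ≤ FL L lam := by
  have hlam0 : 0 < lam := by linarith
  have hlog : ContinuousOn log (Icc (1 / lam) 1) :=
    continuousOn_log.mono fun t ht => (lt_of_lt_of_le (by positivity) ht.1).ne'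
  refine le_of_forall_lt_imp_le_of_dense fun d hd => ?_
  obtain ⟨p, hp, q, hq, hpq, hgap⟩ :=
    exists_mem_convexHull_momentCurve_of_lt_bestApproxError (M := L)
      ((div_le_one hlam0).2 hlam.le) hlog (show d / 2 < _ by linarith)
  obtain ⟨μ, _, hμ, hmean, hmom, hphi⟩ := exists_measure_of_mem_convexHull_momentCurve_log hlam0 hp
  obtain ⟨μ', _, hμ', hmean', hmom', hphi'⟩ :=
    exists_measure_of_mem_convexHull_momentCurve_log hlam0 hq
  calc d ≤ (∫ x, phi x ∂μ) - ∫ x, phi x ∂μ' := by rw [hphi, hphi']; linarith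
    _ ≤ FL L lam := integral_phi_sub_le_FL hμ hμ' hmean hmean' fun j hj hjL => by
      obtain ⟨k, rfl⟩ : ∃ k, j = k + 1 := ⟨j - 1, by omega⟩
      rw [hmom ⟨k, by omega⟩, hmom' ⟨k, by omega⟩, hpq]
end
end

section
/- There exist universal positive constants c, c', L0 such that for every integer L ≥ L0: E_{⌊cL⌋}(log, [L^{−2}, 1]) ≥ c'. -/
/-!
If `p` has degree at most `L` and approximates `log` within `ε` on `[L⁻², 1]`, then, because
`log (2x) - log x = log 2`, the polynomial `q x = p (2x) - p x - log 2` is bounded by `2ε` on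
`[L⁻², 1/2]` while `q 0 = -log 2`. A polynomial of degree `L` bounded by `M` on
`[r (cosh t - 1), r (cosh t + 1)]` is at most `M T_L (cosh t) = M cosh (L t)` at `0`
(extremality of Chebyshev polynomials outside `[-1, 1]`). For `t = 6 / L` and `r = 1/8` this
interval lies in `[L⁻², 1/2]`, so `log 2 ≤ 2 ε cosh 6`.
-/

open scoped BigOperators
open Real

noncomputable section

open Polynomial Set

namespace Polynomial.Chebyshev

theorem abs_eval_le_mul_eval_T_real {n : ℕ} {P : ℝ[X]} {M x : ℝ} (hdeg : P.degree ≤ n)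
    (hbnd : ∀ y ∈ Icc (-1 : ℝ) 1, |P.eval y| ≤ M) (hx : 1 ≤ x) :
    |P.eval x| ≤ M * (T ℝ n).eval x := by
  have hT : 0 < (T ℝ n).eval x := one_pos.trans_le (one_le_eval_T_real n hx)
  have hM : 0 ≤ M := (abs_nonneg _).trans (hbnd 0 ⟨by norm_num, by norm_num⟩)
  -- `M` may vanish, so Mathlib's bound for `|Q| ≤ 1` is applied to `Q / M'` for every `M' > M`.
  have upper : ∀ M' > M, ∀ Q : ℝ[X], Q.degree ≤ n → (∀ y ∈ Icc (-1 : ℝ) 1, |Q.eval y| ≤ M) →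
      Q.eval x ≤ M' * (T ℝ n).eval x := by
    intro M' hM' Q hQdeg hQbnd
    have hM'pos : 0 < M' := hM.trans_lt hM'
    have hnorm := eval_iterate_derivative_le_of_forall_abs_le_one (k := 0)
      (P := Polynomial.C M'⁻¹ * Q) hx ((degree_C_mul (inv_ne_zero hM'pos.ne')).trans_le hQdeg)
      fun y hy => by
        rw [eval_mul, eval_C, abs_mul, abs_inv, abs_of_pos hM'pos, inv_mul_le_one₀ hM'pos]
        exact (hQbnd y hy).trans hM'.le
    simp only [Function.iterate_zero, id_eq, eval_mul, eval_C] at hnorm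
    rwa [inv_mul_le_iff₀ hM'pos] at hnorm
  rw [← div_le_iff₀ hT]
  refine le_of_forall_gt_imp_ge_of_dense fun M' hM' => ?_
  rw [div_le_iff₀ hT, abs_le, neg_le]
  refine ⟨?_, upper M' hM' P hdeg hbnd⟩
  simpa using upper M' hM' (-P) (by rwa [degree_neg]) (by simpa using hbnd)

theorem abs_eval_zero_le_mul_cosh {n : ℕ} {q : ℝ[X]} {M r t : ℝ} (hr : 0 ≤ r)
    (hdeg : q.natDegree ≤ n)
    (hbnd : ∀ x ∈ Icc (r * (cosh t - 1)) (r * (cosh t + 1)), |q.eval x| ≤ M) :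
    |q.eval 0| ≤ M * cosh (n * t) := by
  set P := q.comp (Polynomial.C (r * cosh t) - Polynomial.C r * X)
  have hPdeg : P.degree ≤ n := by
    have hlin : (Polynomial.C (r * cosh t) - Polynomial.C r * X).natDegree ≤ 1 := by
      compute_degree
    exact degree_le_of_natDegree_le <| natDegree_comp_le.trans <| by nlinarith
  have hP : ∀ y, P.eval y = q.eval (r * cosh t - r * y) := by simp [P]
  have := abs_eval_le_mul_eval_T_real (M := M) hPdeg (fun y hy => ?_) (one_le_cosh t)
  · rwa [hP, sub_self, T_real_cosh, Int.cast_natCast] at this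
  · rw [hP]
    exact hbnd _ ⟨by nlinarith [hy.2], by nlinarith [hy.1]⟩

end Polynomial.Chebyshev

theorem le_bestApproxError {L : ℕ} {f : ℝ → ℝ} {a b c : ℝ} (hf : ContinuousOn f (Icc a b))
    (h : ∀ p : ℝ[X], p.natDegree ≤ L → ∀ ε, (∀ x ∈ Icc a b, |f x - p.eval x| ≤ ε) → c ≤ ε) :
    c ≤ bestApproxError L f a b := by
  have : Nonempty {p : ℝ[X] // p.natDegree ≤ L} := ⟨⟨0, by simp⟩⟩
  refine le_ciInf fun ⟨p, hp⟩ => h p hp _ fun x hx =>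
    le_ciSup (f := fun x : Icc a b => |f x - p.eval (x : ℝ)|) ?_ ⟨x, hx⟩
  have hcont : ContinuousOn (fun x => |f x - p.eval x|) (Icc a b) :=
    (hf.sub p.continuousOn).abs
  simpa only [image_eq_range] using (isCompact_Icc.image_of_continuousOn hcont).bddAbove

theorem natDegree_comp_two_mul_sub_sub_C_le (p : ℝ[X]) (a : ℝ) :
    (p.comp (Polynomial.C 2 * X) - p - Polynomial.C a).natDegree ≤ p.natDegree := by
  have hcomp : (p.comp (Polynomial.C 2 * X)).natDegree ≤ p.natDegree :=
    natDegree_comp_le.trans (by rw [natDegree_C_mul_X _ two_ne_zero, mul_one])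
  exact (natDegree_sub_le_of_le (natDegree_sub_le_of_le hcomp le_rfl) (natDegree_C a).le).trans
    (by simp)

theorem abs_eval_comp_two_mul_sub_sub_log_two_le {p : ℝ[X]} {a ε : ℝ} (ha : 0 < a)
    (hp : ∀ x ∈ Icc a 1, |log x - p.eval x| ≤ ε) {x : ℝ} (hx : x ∈ Icc a (1 / 2)) :
    |(p.comp (Polynomial.C 2 * X) - p - Polynomial.C (log 2)).eval x| ≤ 2 * ε := by
  have hx0 : 0 < x := ha.trans_le hx.1
  have heval : (p.comp (Polynomial.C 2 * X) - p - Polynomial.C (log 2)).eval x =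
      (log x - p.eval x) - (log (2 * x) - p.eval (2 * x)) := by
    simp only [eval_sub, eval_comp, eval_mul, eval_C, eval_X, log_mul two_ne_zero hx0.ne']
    ring
  rw [heval]
  calc _ ≤ |log x - p.eval x| + |log (2 * x) - p.eval (2 * x)| := abs_sub _ _
    _ ≤ ε + ε := add_le_add (hp x ⟨hx.1, by linarith [hx.2]⟩)
        (hp (2 * x) ⟨by linarith [hx.1], by linarith [hx.2]⟩)
    _ = 2 * ε := by ring

theorem Icc_cosh_subset {t : ℝ} (ht₀ : 0 ≤ t) (ht₁ : t ≤ 1) :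
    Icc (8⁻¹ * (cosh t - 1)) (8⁻¹ * (cosh t + 1)) ⊆ Icc (t ^ 2 / 32) (1 / 2) := by
  have hlow : 1 + t ^ 2 / 4 ≤ cosh t := by
    rw [cosh_eq]
    nlinarith [quadratic_le_exp_of_nonneg ht₀, add_one_le_exp (-t)]
  have hhigh : cosh t ≤ 3 :=
    calc cosh t ≤ exp (t ^ 2 / 2) := cosh_le_exp_half_sq t
      _ ≤ exp 1 := exp_le_exp.mpr (by nlinarith)
      _ ≤ 3 := by linarith [exp_one_lt_d9]
  exact Icc_subset_Icc (by linarith) (by linarith)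

/-- the degree-`⌊cL⌋` approximation error of `log` on `[L⁻², 1]` stays
bounded away from zero. -/
theorem approx_error_log_bounded_away :
    ∃ c c' : ℝ, ∃ L0 : ℕ, 0 < c ∧ 0 < c' ∧ 0 < L0 ∧
      ∀ L : ℕ, L0 ≤ L →
        c' ≤ bestApproxError ⌊c * (L : ℝ)⌋₊ Real.log (((L : ℝ)) ^ (2 : ℕ))⁻¹ 1 := by
  refine ⟨1, log 2 / (2 * cosh 6), 6, one_pos, by positivity, by norm_num, fun L hL => ?_⟩
  have hL6 : (6 : ℝ) ≤ L := by exact_mod_cast hL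
  rw [one_mul, Nat.floor_natCast]
  refine le_bestApproxError (continuousOn_log.mono fun x hx => ?_) fun p hp ε hε => ?_
  · exact ((inv_pos.mpr (by positivity)).trans_le hx.1).ne'
  set t : ℝ := 6 / L
  have hwindow : Icc (8⁻¹ * (cosh t - 1)) (8⁻¹ * (cosh t + 1)) ⊆ Icc ((L : ℝ) ^ 2)⁻¹ (1 / 2) :=
    (Icc_cosh_subset (by positivity) ((div_le_one (by positivity)).mpr hL6)).trans
      (Icc_subset_Icc_left (by rw [div_pow]; field_simp; norm_num))
  have hcheb := Polynomial.Chebyshev.abs_eval_zero_le_mul_cosh (n := L) (by norm_num)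
    ((natDegree_comp_two_mul_sub_sub_C_le p _).trans hp)
    fun x hx => abs_eval_comp_two_mul_sub_sub_log_two_le (by positivity) hε (hwindow hx)
  have hLt : (L : ℝ) * t = 6 := mul_div_cancel₀ _ (by positivity)
  simp only [eval_sub, eval_comp, eval_mul, eval_C, eval_X, mul_zero, sub_self, zero_sub,
    abs_neg, abs_of_pos (log_pos one_lt_two), hLt] at hcheb
  rw [div_le_iff₀ (by positivity)]
  linarith
end
end

section
/- For every real x > 0: 0 ≤ x·log x − (x−1) − (1/2)·(x−1)² + (1/6)·(x−1)³ ≤ (x−1)⁴/3. -/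
/-!
Write `T x = (x - 1) + (x - 1)^2/2 - (x - 1)^3/6` for the cubic Taylor polynomial of `x log x`
at `1`. After division by `x`, the two bounds say that `G c x = (T x + c (x - 1)^4)/x - log x`
is `≤ 0` for `c = 0` and `≥ 0` for `c = 1/3`. Both functions vanish at `1`, and the derivative
of `G c` is `(x - 1)^3 (4c - 1/3 + 3c (x - 1)) / x^2`, which for these two values of `c` changes
sign only at `x = 1`; so `x = 1` is a global extremum of `G c` on `(0, ∞)`.
-/

open Real Set

lemma isMinOn_Ioi_of_hasDerivAt {f f' : ℝ → ℝ} {a b : ℝ} (hab : a < b)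
    (hf : ∀ y ∈ Ioi a, HasDerivAt f (f' y) y) (hf' : ∀ y ∈ Ioi a, 0 ≤ (y - b) * f' y) :
    IsMinOn f (Ioi a) b := by
  have hderiv : ∀ y ∈ Ioi a, deriv f y = f' y := fun y hy => (hf y hy).deriv
  refine isMinOn_Ioi_of_deriv (hf b hab).continuousAt
    (fun y hy => (hf y hy.1).differentiableAt.differentiableWithinAt)
    (fun y hy => (hf y (hab.trans hy)).differentiableAt.differentiableWithinAt)
    (fun y hy => ?_) (fun y hy => ?_)
  · rw [hderiv y hy.1]
    exact nonpos_of_mul_nonneg_right (hf' y hy.1) (sub_neg.mpr hy.2)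
  · rw [hderiv y (hab.trans hy)]
    exact nonneg_of_mul_nonneg_right (hf' y (hab.trans hy)) (sub_pos.mpr hy)

lemma hasDerivAt_taylor_div_sub_log (c : ℝ) {y : ℝ} (hy : y ≠ 0) :
    HasDerivAt
      (fun y => ((y - 1) + (y - 1) ^ 2 / 2 - (y - 1) ^ 3 / 6 + c * (y - 1) ^ 4) / y - log y)
      ((y - 1) ^ 3 * (4 * c - 1 / 3 + 3 * c * (y - 1)) / y ^ 2) y := by
  have hu : HasDerivAt (fun y : ℝ => y - 1) 1 y := (hasDerivAt_id y).sub_const 1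
  have hp : HasDerivAt (fun y => (y - 1) + (y - 1) ^ 2 / 2 - (y - 1) ^ 3 / 6 + c * (y - 1) ^ 4)
      (1 + (y - 1) - (y - 1) ^ 2 / 2 + 4 * c * (y - 1) ^ 3) y :=
    (((hu.add ((hu.pow 2).div_const 2)).sub ((hu.pow 3).div_const 6)).add
      ((hu.pow 4).const_mul c)).congr_deriv (by ring)
  refine ((hp.div (hasDerivAt_id' y) hy).sub (hasDerivAt_log hy)).congr_deriv ?_
  field_simp
  ring

lemma taylor_le_mul_log {x : ℝ} (hx : 0 < x) :
    (x - 1) + (x - 1) ^ 2 / 2 - (x - 1) ^ 3 / 6 ≤ x * log x := by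
  have hmin := isMinOn_Ioi_of_hasDerivAt zero_lt_one
    (fun y hy => (hasDerivAt_taylor_div_sub_log 0 (ne_of_gt hy)).neg) (fun y _ => by
      rw [show (y - 1) * -((y - 1) ^ 3 * (4 * 0 - 1 / 3 + 3 * 0 * (y - 1)) / y ^ 2)
        = (y - 1) ^ 4 / (3 * y ^ 2) by ring]
      positivity)
  have h : ((x - 1) + (x - 1) ^ 2 / 2 - (x - 1) ^ 3 / 6) / x ≤ log x := by
    simpa using hmin hx
  rwa [div_le_iff₀ hx, mul_comm] at h

lemma mul_log_le_taylor_add {x : ℝ} (hx : 0 < x) :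
    x * log x ≤ (x - 1) + (x - 1) ^ 2 / 2 - (x - 1) ^ 3 / 6 + (x - 1) ^ 4 / 3 := by
  have hmin := isMinOn_Ioi_of_hasDerivAt zero_lt_one
    (fun y hy => hasDerivAt_taylor_div_sub_log (1 / 3) (ne_of_gt hy)) (fun y hy => by
      rw [show (y - 1) * ((y - 1) ^ 3 * (4 * (1 / 3) - 1 / 3 + 3 * (1 / 3) * (y - 1)) / y ^ 2)
        = (y - 1) ^ 4 * y / y ^ 2 by ring]
      have : 0 < y := hy
      positivity)
  have h : log x ≤ ((x - 1) + (x - 1) ^ 2 / 2 - (x - 1) ^ 3 / 6 + (x - 1) ^ 4 / 3) / x := by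
    simpa [div_eq_inv_mul] using hmin hx
  rwa [le_div_iff₀ hx, mul_comm] at h

/-- Taylor-type bounds for `x log x` around `x = 1`. -/
theorem xlogx_taylor_bounds (x : ℝ) (hx : 0 < x) :
    0 ≤ x * Real.log x - (x - 1) - (1 / 2) * (x - 1) ^ 2 + (1 / 6) * (x - 1) ^ 3 ∧
    x * Real.log x - (x - 1) - (1 / 2) * (x - 1) ^ 2 + (1 / 6) * (x - 1) ^ 3
      ≤ (x - 1) ^ 4 / 3 := by
  constructor
  · linarith [taylor_le_mul_log hx]
  · linarith [mul_log_le_taylor_add hx]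
end

section
/- Let L ≥ 2 and m ≥ 1 be integers with m ≤ 0.1·L. Then τ₁(f_L, Δ_m) ≤ log(2L²/m²), where f_L(x) = −log((1+x)/2 + (1−x)/(2L²)) for x ∈ [−1,1], Δ_m(x) = (1/m)·√(1−x²) + 1/m², and τ₁(f, Δ_m) = sup{ |f(x)−f(y)| : x, y ∈ [−1,1], |x−y| ≤ Δ_m(x) }. -/
open Real

noncomputable section

/-- `f_L(x) = −log((1+x)/2 + (1−x)/(2L²))`. -/
def fL (L : ℕ) (x : ℝ) : ℝ :=
  -Real.log ((1 + x) / 2 + (1 - x) / (2 * (L : ℝ) ^ 2))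

/-- The step function `Δ_m(x) = (1/m)·√(1−x²) + 1/m²`. -/
def Delta (m : ℕ) (x : ℝ) : ℝ :=
  (1 / (m : ℝ)) * Real.sqrt (1 - x ^ 2) + 1 / (m : ℝ) ^ 2

/-- First-order modulus of smoothness of `f` on `[−1,1]` with step `Δ_m`. -/
def tau1 (f : ℝ → ℝ) (m : ℕ) : ℝ :=
  sSup {d : ℝ | ∃ x y : ℝ, x ∈ Set.Icc (-1 : ℝ) 1 ∧ y ∈ Set.Icc (-1 : ℝ) 1 ∧
    |x - y| ≤ Delta m x ∧ d = |f x - f y|}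

lemma aux_amgm1 (x mu s : ℝ) (hx0 : (0:ℝ) ≤ 1+x) (hs0 : 0 ≤ s)
    (hsmu2 : s^2*mu^2 ≤ 2*(1+x)*mu^2) :
    s*mu ≤ (9/20)*(1+x)*mu^2 + 10/9 := by
  have hb : (0:ℝ) ≤ (9/20)*(1+x)*mu^2 + 10/9 := by
    have := mul_nonneg (mul_nonneg (by norm_num : (0:ℝ) ≤ 9/20) hx0) (sq_nonneg mu)
    linarith
  have hsq : (s*mu)^2 ≤ ((9/20)*(1+x)*mu^2 + 10/9)^2 := by
    nlinarith [hsmu2, sq_nonneg ((9/20)*(1+x)*mu^2 - 10/9)]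
  exact le_of_pow_le_pow_left₀ two_ne_zero hb hsq

lemma aux_amgm2 (x mu s : ℝ) (hx0 : (0:ℝ) ≤ 1+x) (hs0 : 0 ≤ s)
    (hsmu2 : s^2*mu^2 ≤ 2*(1+x)*mu^2) :
    s*mu ≤ (1+x)*mu^2 + 1/2 := by
  have hb : (0:ℝ) ≤ (1+x)*mu^2 + 1/2 := by
    have := mul_nonneg hx0 (sq_nonneg mu)
    linarith
  have hsq : (s*mu)^2 ≤ ((1+x)*mu^2 + 1/2)^2 := by
    nlinarith [hsmu2, sq_nonneg ((1+x)*mu^2 - 1/2)]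
  exact le_of_pow_le_pow_left₀ two_ne_zero hb hsq

lemma aux_P1 (x y Lam mu : ℝ) (hLam : 2 ≤ Lam)
    (hmuLam2 : mu^2 ≤ Lam^2/100)
    (hx1 : -1 ≤ x) (hx2 : x ≤ 1) (hy1 : -1 ≤ y) (hy2 : y ≤ 1)
    (hT : (1+x)*mu^2 ≤ (20/11)*((1+y)*mu^2) + 380/99) :
    mu^2 * ((1+x)*Lam^2 + (1-x)) ≤ 2*Lam^2 * ((1+y)*Lam^2 + (1-y)) := by
  have hQ0 : (0:ℝ) ≤ Lam^2 := sq_nonneg Lam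
  have hQ4 : (4:ℝ) ≤ Lam^2 := by nlinarith
  nlinarith [mul_le_mul_of_nonneg_right hT hQ0,
    mul_le_mul_of_nonneg_right hmuLam2 (mul_nonneg (by linarith : (0:ℝ) ≤ 1+y) hQ0),
    mul_le_mul_of_nonneg_right hmuLam2 (by linarith : (0:ℝ) ≤ 1-x),
    mul_nonneg (mul_nonneg (by linarith : (0:ℝ) ≤ 1+y) (by linarith : (0:ℝ) ≤ Lam^2-4)) hQ0,
    mul_nonneg (by linarith : (0:ℝ) ≤ 1-y) hQ0,
    mul_nonneg (by linarith : (0:ℝ) ≤ 1+x) hQ0]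

lemma aux_P2 (x y Lam mu : ℝ) (hLam : 2 ≤ Lam)
    (hmuLam2 : mu^2 ≤ Lam^2/100)
    (hx1 : -1 ≤ x) (hx2 : x ≤ 1) (hy1 : -1 ≤ y) (hy2 : y ≤ 1)
    (hR : (1+y)*mu^2 ≤ 2*((1+x)*mu^2) + 3/2) :
    mu^2 * ((1+y)*Lam^2 + (1-y)) ≤ 2*Lam^2 * ((1+x)*Lam^2 + (1-x)) := by
  have hQ0 : (0:ℝ) ≤ Lam^2 := sq_nonneg Lam
  have hQ4 : (4:ℝ) ≤ Lam^2 := by nlinarith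
  nlinarith [mul_le_mul_of_nonneg_right hR hQ0,
    mul_le_mul_of_nonneg_right hmuLam2 (mul_nonneg (by linarith : (0:ℝ) ≤ 1+x) hQ0),
    mul_le_mul_of_nonneg_right hmuLam2 (by linarith : (0:ℝ) ≤ 1-y),
    mul_nonneg (mul_nonneg (by linarith : (0:ℝ) ≤ 1+x) (by linarith : (0:ℝ) ≤ Lam^2-4)) hQ0,
    mul_nonneg (by linarith : (0:ℝ) ≤ 1-x) hQ0,
    mul_nonneg (by linarith : (0:ℝ) ≤ 1+y) hQ0]

set_option maxHeartbeats 1000000 in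
lemma key_bound (L m : ℕ) (hL : 2 ≤ L) (hm : 1 ≤ m)
    (hmL : (m : ℝ) ≤ 0.1 * (L : ℝ)) (x y : ℝ)
    (hx : x ∈ Set.Icc (-1:ℝ) 1) (hy : y ∈ Set.Icc (-1:ℝ) 1)
    (hxy : |x - y| ≤ Delta m x) :
    |fL L x - fL L y| ≤ Real.log (2 * (L : ℝ) ^ 2 / (m : ℝ) ^ 2) := by
  have hLam : (2:ℝ) ≤ (L:ℝ) := by exact_mod_cast hL
  have hmu : (1:ℝ) ≤ (m:ℝ) := by exact_mod_cast hm
  obtain ⟨hx1, hx2⟩ := hx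
  obtain ⟨hy1, hy2⟩ := hy
  set Lam := (L:ℝ) with hLamdef
  set mu := (m:ℝ) with hmudef
  have hLam0 : (0:ℝ) < Lam := by linarith
  have hmu0 : (0:ℝ) < mu := by linarith
  have hmuLam2 : mu^2 ≤ Lam^2/100 := by nlinarith
  set s := Real.sqrt (1 - x^2) with hsdef
  have hs0 : 0 ≤ s := Real.sqrt_nonneg _
  have hs2 : s^2 = 1 - x^2 := Real.sq_sqrt (by nlinarith)
  rw [abs_sub_le_iff] at hxy
  obtain ⟨hd1, hd2⟩ := hxy
  have hDelta : Delta m x = s/mu + 1/mu^2 := by rw [Delta]; ring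
  rw [hDelta] at hd1 hd2
  have hmul : mu^2*(s/mu + 1/mu^2) = s*mu + 1 := by field_simp
  have hA1 : mu^2*(x - y) ≤ s*mu + 1 := by
    calc mu^2*(x-y) ≤ mu^2*(s/mu + 1/mu^2) :=
          mul_le_mul_of_nonneg_left hd1 (sq_nonneg mu)
      _ = s*mu + 1 := hmul
  have hA2 : mu^2*(y - x) ≤ s*mu + 1 := by
    calc mu^2*(y-x) ≤ mu^2*(s/mu + 1/mu^2) :=
          mul_le_mul_of_nonneg_left hd2 (sq_nonneg mu)
      _ = s*mu + 1 := hmul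
  clear hd1 hd2 hmul hDelta
  clear_value s
  have hx0 : (0:ℝ) ≤ 1 + x := by linarith
  have hsx : s^2 ≤ 2*(1+x) := by nlinarith
  have hsmu2 : s^2*mu^2 ≤ 2*(1+x)*mu^2 :=
    mul_le_mul_of_nonneg_right hsx (sq_nonneg mu)
  have amgm1 := aux_amgm1 x mu s hx0 hs0 hsmu2
  have amgm2 := aux_amgm2 x mu s hx0 hs0 hsmu2
  have hT : (1+x)*mu^2 ≤ (20/11)*((1+y)*mu^2) + 380/99 := by linarith [hA1, amgm1]
  have hR : (1+y)*mu^2 ≤ 2*((1+x)*mu^2) + 3/2 := by linarith [hA2, amgm2]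
  have P1 := aux_P1 x y Lam mu hLam hmuLam2 hx1 hx2 hy1 hy2 hT
  have P2 := aux_P2 x y Lam mu hLam hmuLam2 hx1 hx2 hy1 hy2 hR
  set Nx := (1+x)*Lam^2 + (1-x) with hNxdef
  set Ny := (1+y)*Lam^2 + (1-y) with hNydef
  have hQ1 : (1:ℝ) ≤ Lam^2 := by nlinarith [hLam]
  have hNx0 : 0 < Nx := by
    have h := mul_le_mul_of_nonneg_left hQ1 hx0
    rw [hNxdef]; linarith [h]
  have hNy0 : 0 < Ny := by
    have h := mul_le_mul_of_nonneg_left hQ1 (by linarith : (0:ℝ) ≤ 1+y)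
    rw [hNydef]; linarith [h]
  have hgx : fL L x = Real.log (2*Lam^2) - Real.log Nx := by
    rw [fL]
    have e : (1+x)/2 + (1-x)/(2*Lam^2) = Nx / (2*Lam^2) := by
      field_simp
      ring
    rw [e, Real.log_div hNx0.ne' (by positivity), neg_sub]
  have hgy : fL L y = Real.log (2*Lam^2) - Real.log Ny := by
    rw [fL]
    have e : (1+y)/2 + (1-y)/(2*Lam^2) = Ny / (2*Lam^2) := by
      field_simp
      ring
    rw [e, Real.log_div hNy0.ne' (by positivity), neg_sub]
  clear_value Nx Ny
  have hfd : fL L x - fL L y = Real.log Ny - Real.log Nx := by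
    rw [hgx, hgy]; ring
  rw [hfd, abs_sub_le_iff]
  have hC0 : (0:ℝ) < 2*Lam^2/mu^2 := by positivity
  constructor
  · have h1 : Ny ≤ (2*Lam^2/mu^2) * Nx := by
      rw [div_mul_eq_mul_div, le_div_iff₀ (by positivity : (0:ℝ) < mu^2)]
      linarith [P2]
    calc Real.log Ny - Real.log Nx
        ≤ Real.log ((2*Lam^2/mu^2) * Nx) - Real.log Nx := by
          have := Real.log_le_log hNy0 h1
          linarith
      _ = Real.log (2*Lam^2/mu^2) := by
          rw [Real.log_mul hC0.ne' hNx0.ne']; ring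
  · have h1 : Nx ≤ (2*Lam^2/mu^2) * Ny := by
      rw [div_mul_eq_mul_div, le_div_iff₀ (by positivity : (0:ℝ) < mu^2)]
      linarith [P1]
    calc Real.log Nx - Real.log Ny
        ≤ Real.log ((2*Lam^2/mu^2) * Ny) - Real.log Ny := by
          have := Real.log_le_log hNx0 h1
          linarith
      _ = Real.log (2*Lam^2/mu^2) := by
          rw [Real.log_mul hC0.ne' hNy0.ne']; ring

/-- direct bound on the modulus of smoothness of `f_L`. -/
theorem tau1_fL_direct_bound (L m : ℕ) (hL : 2 ≤ L) (hm : 1 ≤ m)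
    (hmL : (m : ℝ) ≤ 0.1 * (L : ℝ)) :
    tau1 (fL L) m ≤ Real.log (2 * (L : ℝ) ^ 2 / (m : ℝ) ^ 2) := by
  have hLam : (2:ℝ) ≤ (L:ℝ) := by exact_mod_cast hL
  have hmu : (1:ℝ) ≤ (m:ℝ) := by exact_mod_cast hm
  have hlog : 0 ≤ Real.log (2 * (L : ℝ) ^ 2 / (m : ℝ) ^ 2) := by
    apply Real.log_nonneg
    rw [le_div_iff₀ (by positivity)]
    nlinarith
  rw [tau1]
  apply Real.sSup_le _ hlog
  rintro d ⟨x, y, hx, hy, hxy, rfl⟩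
  exact key_bound L m hL hm hmL x y hx hy hxy
end
end

section
/- For every integer L ≥ 10: τ₁(f_L, Δ_L) ≥ 1, where f_L(x) = −log((1+x)/2 + (1−x)/(2L²)) for x ∈ [−1,1], Δ_L(x) = (1/L)·√(1−x²) + 1/L², and τ₁(f, Δ_L) = sup{ |f(x)−f(y)| : x, y ∈ [−1,1], |x−y| ≤ Δ_L(x) }. -/
open Real

noncomputable section

lemma fL_bounds (L : ℕ) (hL : 10 ≤ L) {x : ℝ} (hx : x ∈ Set.Icc (-1 : ℝ) 1) :
    0 ≤ fL L x ∧ fL L x ≤ 2 * Real.log L := by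
  have hLR : (10:ℝ) ≤ (L:ℝ) := by exact_mod_cast hL
  obtain ⟨hx1, hx2⟩ := hx
  have hL2 : (0:ℝ) < (L:ℝ)^2 := by positivity
  set g : ℝ := (1 + x) / 2 + (1 - x) / (2 * (L : ℝ) ^ 2) with hg
  have hglb : 1 / (L:ℝ)^2 ≤ g := by
    have key : g - 1 / (L:ℝ)^2 = (1 + x) * ((L:ℝ)^2 - 1) / (2 * (L:ℝ)^2) := by
      rw [hg]; field_simp; ring
    have hnn : 0 ≤ (1 + x) * ((L:ℝ)^2 - 1) / (2 * (L:ℝ)^2) := by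
      apply div_nonneg _ (by positivity)
      apply mul_nonneg (by linarith) (by nlinarith)
    linarith
  have hgub : g ≤ 1 := by
    have key : 1 - g = (1 - x) * ((L:ℝ)^2 - 1) / (2 * (L:ℝ)^2) := by
      rw [hg]; field_simp; ring
    have hnn : 0 ≤ (1 - x) * ((L:ℝ)^2 - 1) / (2 * (L:ℝ)^2) := by
      apply div_nonneg _ (by positivity)
      apply mul_nonneg (by linarith) (by nlinarith)
    rw [← sub_nonneg, key]; exact hnn
  have hg0 : 0 < g := lt_of_lt_of_le (by positivity) hglb
  constructor
  · simp only [fL, ← hg, neg_nonneg]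
    exact Real.log_nonpos hg0.le hgub
  · simp only [fL, ← hg]
    have h1 : Real.log (1 / (L:ℝ)^2) ≤ Real.log g := Real.log_le_log (by positivity) hglb
    have h2 : Real.log (1 / (L:ℝ)^2) = -(2 * Real.log L) := by
      rw [one_div, Real.log_inv, Real.log_pow]
      push_cast; ring
    linarith

/-- converse bound on the modulus of smoothness of `f_L`. -/
theorem tau1_fL_converse_bound (L : ℕ) (hL : 10 ≤ L) :
    1 ≤ tau1 (fL L) L := by
  have hLR : (10:ℝ) ≤ (L:ℝ) := by exact_mod_cast hL
  have hL2 : (0:ℝ) < (L:ℝ)^2 := by positivity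
  set t : ℝ := 18 / (5 * (L:ℝ)^2) with ht
  have ht0 : 0 < t := by positivity
  have htle : t ≤ 18/500 := by
    rw [ht, div_le_div_iff₀ (by positivity) (by norm_num)]
    nlinarith
  set x : ℝ := -1 + t with hxdef
  have hx : x ∈ Set.Icc (-1:ℝ) 1 := ⟨by linarith, by linarith⟩
  have hy : (-1:ℝ) ∈ Set.Icc (-1:ℝ) 1 := ⟨le_refl _, by norm_num⟩
  -- step condition
  have hstep : |x - (-1)| ≤ Delta L x := by
    have h1 : 1 - x^2 = t * (2 - t) := by rw [hxdef]; ring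
    have hsq : (13 / (5 * (L:ℝ)))^2 ≤ 1 - x^2 := by
      rw [h1, ht]
      rw [div_pow, div_le_iff₀ (by positivity)]
      have : (18 / (5 * (L:ℝ)^2)) * (2 - 18 / (5 * (L:ℝ)^2)) * (5 * (L:ℝ))^2
          = 18 * (2 - 18 / (5 * (L:ℝ)^2)) * 5 := by
        field_simp
      rw [this]
      have : 18 / (5 * (L:ℝ)^2) ≤ 18/500 := htle
      nlinarith
    have hsqrt : 13 / (5 * (L:ℝ)) ≤ Real.sqrt (1 - x^2) := by
      rw [show (13 / (5 * (L:ℝ))) = Real.sqrt ((13 / (5 * (L:ℝ)))^2) by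
        rw [Real.sqrt_sq (by positivity)]]
      exact Real.sqrt_le_sqrt hsq
    have habs : |x - (-1)| = t := by
      rw [hxdef, show -1 + t - (-1) = t by ring, abs_of_pos ht0]
    rw [habs, Delta]
    have hLpos : (0:ℝ) < (L:ℝ) := by linarith
    have h2 : (1 / (L:ℝ)) * (13 / (5 * (L:ℝ))) ≤ (1 / (L:ℝ)) * Real.sqrt (1 - x^2) := by
      apply mul_le_mul_of_nonneg_left hsqrt (by positivity)
    have h3 : (1 / (L:ℝ)) * (13 / (5 * (L:ℝ))) = 13 / (5 * (L:ℝ)^2) := by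
      field_simp
    have h4 : t = 13 / (5 * (L:ℝ)^2) + 1 / (L:ℝ)^2 := by
      rw [ht]; field_simp; ring
    rw [h4]
    linarith [h2, h3.symm ▸ h2]
  -- value condition
  have hgy : (1 + (-1:ℝ)) / 2 + (1 - (-1:ℝ)) / (2 * (L : ℝ) ^ 2) = 1 / (L:ℝ)^2 := by
    field_simp
    norm_num
  have hgx : (1 + x) / 2 + (1 - x) / (2 * (L : ℝ) ^ 2)
      = (14/5 - 9/(5*(L:ℝ)^2)) / (L:ℝ)^2 := by
    rw [hxdef, ht]; field_simp; ring
  have hzlb : (2.78:ℝ) ≤ 14/5 - 9/(5*(L:ℝ)^2) := by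
    have : 9/(5*(L:ℝ)^2) ≤ 9/500 := by
      rw [div_le_div_iff₀ (by positivity) (by norm_num)]; nlinarith
    linarith
  have hz0 : (0:ℝ) < 14/5 - 9/(5*(L:ℝ)^2) := by linarith
  have hval : 1 ≤ |fL L x - fL L (-1)| := by
    have h5 : fL L (-1) - fL L x
        = Real.log ((14/5 - 9/(5*(L:ℝ)^2)) / (L:ℝ)^2) - Real.log (1/(L:ℝ)^2) := by
      simp only [fL, hgy, hgx]; ring
    have h6 : Real.log ((14/5 - 9/(5*(L:ℝ)^2)) / (L:ℝ)^2) - Real.log (1/(L:ℝ)^2)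
        = Real.log (14/5 - 9/(5*(L:ℝ)^2)) := by
      rw [Real.log_div (by positivity) (by positivity),
          Real.log_div (by norm_num) (by positivity)]
      simp
    have h7 : 1 ≤ Real.log (14/5 - 9/(5*(L:ℝ)^2)) := by
      rw [Real.le_log_iff_exp_le hz0]
      have := Real.exp_one_lt_d9
      linarith
    have h8 : 1 ≤ fL L (-1) - fL L x := by rw [h5, h6]; exact h7
    calc (1:ℝ) ≤ fL L (-1) - fL L x := h8
      _ ≤ |fL L (-1) - fL L x| := le_abs_self _
      _ = |fL L x - fL L (-1)| := abs_sub_comm _ _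
  -- bounded above
  have hbdd : BddAbove {d : ℝ | ∃ x y : ℝ, x ∈ Set.Icc (-1 : ℝ) 1 ∧ y ∈ Set.Icc (-1 : ℝ) 1 ∧
      |x - y| ≤ Delta L x ∧ d = |fL L x - fL L y|} := by
    refine ⟨2 * Real.log L, ?_⟩
    rintro d ⟨a, b, ha, hb, -, rfl⟩
    obtain ⟨ha1, ha2⟩ := fL_bounds L hL ha
    obtain ⟨hb1, hb2⟩ := fL_bounds L hL hb
    rw [abs_sub_le_iff]
    constructor <;> linarith
  have hmem : |fL L x - fL L (-1)| ∈ {d : ℝ | ∃ x y : ℝ, x ∈ Set.Icc (-1 : ℝ) 1 ∧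
      y ∈ Set.Icc (-1 : ℝ) 1 ∧ |x - y| ≤ Delta L x ∧ d = |fL L x - fL L y|} :=
    ⟨x, -1, hx, hy, hstep, rfl⟩
  exact le_trans hval (le_csSup hbdd hmem)
end
end

section
/- Let k ≥ 2 be an integer and 0 < ε < 1. Define distributions P = (1/(3(k−1)),...,1/(3(k−1)), 2/3) and Q = ((1+ε)/(3(k−1)),...,(1+ε)/(3(k−1)), (2−ε)/3) on [k] (the first k−1 coordinates being equal). Then: (i) D(P‖Q) = (2/3)·log(2/(2−ε)) + (1/3)·log(1/(1+ε)) ≤ ε²; and (ii) H(Q) − H(P) ≥ (1/3)·log(2(k−1))·ε − ε². -/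
open scoped BigOperators
open Real

noncomputable section

/-- Kullback–Leibler divergence `D(P‖Q) = ∑ pᵢ log(pᵢ/qᵢ)`. -/
def KL {k : ℕ} (P Q : Fin k → ℝ) : ℝ := ∑ i, P i * Real.log (P i / Q i)

/-!
Both distributions put a mass `p` uniformly on the first `k - 1` points and `1 - p` on the last,
with `p = 1/3` for `P` and `q = (1 + ε)/3` for `Q`. The uniform parts cancel in the divergence,
so `D(P‖Q)` is the binary divergence `d(p ‖ q)`, and `H(P) = p log (k - 1) + h(p)` with `h` the
binary entropy. Expanding the logarithms gives the exact tangent-line identity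
`h(q) - h(p) = (q - p) log ((1 - p)/p) - d(q ‖ p)`, where `log ((1 - p)/p) = log 2` at `p = 1/3`.
Both binary divergences are bounded by the χ²-distance `(p - q)² / (q (1 - q))`,
by `log x ≤ x - 1`.
-/

def twoLevel (m : ℕ) (p : ℝ) : Fin (m + 1) → ℝ :=
  fun i => if (i : ℕ) < m then p / m else 1 - p

@[simp]
lemma twoLevel_castSucc (m : ℕ) (p : ℝ) (i : Fin m) : twoLevel m p i.castSucc = p / m := by
  simp [twoLevel]

@[simp]
lemma twoLevel_last (m : ℕ) (p : ℝ) : twoLevel m p (Fin.last m) = 1 - p := by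
  simp [twoLevel]

def binKL (p q : ℝ) : ℝ := p * log (p / q) + (1 - p) * log ((1 - p) / (1 - q))

lemma entropy_twoLevel {m : ℕ} (hm : m ≠ 0) (p : ℝ) :
    entropy (twoLevel m p) = p * log m + binEntropy p := by
  have hm' : (m : ℝ) ≠ 0 := Nat.cast_ne_zero.2 hm
  simp only [entropy, Fin.sum_univ_castSucc, twoLevel_castSucc, twoLevel_last, Finset.sum_const,
    Finset.card_univ, Fintype.card_fin, nsmul_eq_mul, binEntropy, one_div, inv_div]
  rcases eq_or_ne p 0 with rfl | hp
  · simp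
  · rw [log_div hm' hp, log_inv, log_inv]
    field_simp
    ring

lemma KL_twoLevel {m : ℕ} (hm : m ≠ 0) (p q : ℝ) :
    KL (twoLevel m p) (twoLevel m q) = binKL p q := by
  have hm' : (m : ℝ) ≠ 0 := Nat.cast_ne_zero.2 hm
  simp only [KL, Fin.sum_univ_castSucc, twoLevel_castSucc, twoLevel_last, Finset.sum_const,
    Finset.card_univ, Fintype.card_fin, nsmul_eq_mul, div_div_div_cancel_right₀ hm', binKL]
  field_simp

lemma binEntropy_sub_binEntropy {p q : ℝ} (hp₀ : 0 < p) (hp₁ : p < 1) (hq₀ : 0 < q)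
    (hq₁ : q < 1) :
    binEntropy q - binEntropy p = (q - p) * log ((1 - p) / p) - binKL q p := by
  have hp₁' : 0 < 1 - p := sub_pos.2 hp₁
  have hq₁' : 0 < 1 - q := sub_pos.2 hq₁
  simp only [binEntropy, binKL, log_inv, log_div hp₁'.ne' hp₀.ne', log_div hq₀.ne' hp₀.ne',
    log_div hq₁'.ne' hp₁'.ne']
  ring

lemma mul_log_div_le_mul_div_sub_one {p q : ℝ} (hp : 0 ≤ p) (hq : 0 < q) :
    p * log (p / q) ≤ p * (p / q - 1) := by
  rcases hp.eq_or_lt with rfl | hp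
  · simp
  · exact mul_le_mul_of_nonneg_left (log_le_sub_one_of_pos (div_pos hp hq)) hp.le

lemma binKL_le_sq_div {p q : ℝ} (hp₀ : 0 ≤ p) (hp₁ : p ≤ 1) (hq₀ : 0 < q)
    (hq₁ : q < 1) :
    binKL p q ≤ (p - q) ^ 2 / (q * (1 - q)) := by
  have hq₁' : 0 < 1 - q := sub_pos.2 hq₁
  have hχ : p * (p / q - 1) + (1 - p) * ((1 - p) / (1 - q) - 1) = (p - q) ^ 2 / (q * (1 - q)) := by
    field_simp
    ring
  rw [binKL, ← hχ]
  exact add_le_add (mul_log_div_le_mul_div_sub_one hp₀ hq₀)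
    (mul_log_div_le_mul_div_sub_one (sub_nonneg.2 hp₁) hq₁')

/-- the two-point construction used in Le Cam's method. -/
theorem two_point_construction (k : ℕ) (hk : 2 ≤ k) (ε : ℝ) (hε0 : 0 < ε) (hε1 : ε < 1)
    (P Q : Fin k → ℝ)
    (hP : ∀ i : Fin k, P i = if (i : ℕ) < k - 1 then 1 / (3 * ((k : ℝ) - 1)) else 2 / 3)
    (hQ : ∀ i : Fin k, Q i =
      if (i : ℕ) < k - 1 then (1 + ε) / (3 * ((k : ℝ) - 1)) else (2 - ε) / 3) :
    (KL P Q = (2 / 3) * Real.log (2 / (2 - ε)) + (1 / 3) * Real.log (1 / (1 + ε)) ∧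
      KL P Q ≤ ε ^ 2) ∧
    (1 / 3) * Real.log (2 * ((k : ℝ) - 1)) * ε - ε ^ 2 ≤ entropy Q - entropy P := by
  obtain ⟨m, rfl⟩ : ∃ m, k = m + 1 := ⟨k - 1, by omega⟩
  have hm : m ≠ 0 := by omega
  have hP' : P = twoLevel m (1 / 3) := funext fun i => by
    simp only [hP, twoLevel, Nat.add_sub_cancel, Nat.cast_add_one, add_sub_cancel_right]
    split_ifs <;> ring
  have hQ' : Q = twoLevel m ((1 + ε) / 3) := funext fun i => by
    simp only [hQ, twoLevel, Nat.add_sub_cancel, Nat.cast_add_one, add_sub_cancel_right]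
    split_ifs <;> ring
  rw [hP', hQ', KL_twoLevel hm, entropy_twoLevel hm, entropy_twoLevel hm, Nat.cast_add_one,
    add_sub_cancel_right]
  have hKL :
      binKL (1 / 3) ((1 + ε) / 3) = 2 / 3 * log (2 / (2 - ε)) + 1 / 3 * log (1 / (1 + ε)) := by
    rw [binKL, show (1 / 3 : ℝ) / ((1 + ε) / 3) = 1 / (1 + ε) by field_simp,
      show (1 - 1 / 3 : ℝ) / (1 - (1 + ε) / 3) = 2 / (2 - ε) by field_simp; ring]
    ring
  refine ⟨⟨hKL, ?_⟩, ?_⟩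
  · refine (binKL_le_sq_div (by norm_num) (by norm_num) (by positivity) (by linarith)).trans ?_
    rw [div_le_iff₀ (by nlinarith)]
    nlinarith [mul_pos (mul_pos hε0 hε0) (mul_pos hε0 (sub_pos.2 hε1))]
  · have hH := binEntropy_sub_binEntropy (p := 1 / 3) (q := (1 + ε) / 3) (by norm_num)
      (by norm_num) (by positivity) (by linarith)
    have hKL_rev := binKL_le_sq_div (p := (1 + ε) / 3) (q := 1 / 3) (by positivity) (by linarith)
      (by norm_num) (by norm_num)
    rw [show ((1 - 1 / 3) / (1 / 3) : ℝ) = 2 by norm_num] at hH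
    rw [show ((1 + ε) / 3 - 1 / 3) ^ 2 / (1 / 3 * (1 - 1 / 3) : ℝ) = ε ^ 2 / 2 by ring]
      at hKL_rev
    rw [log_mul two_ne_zero (Nat.cast_ne_zero.2 hm)]
    linarith [sq_nonneg ε]
end
end
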